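/- arXiv:1509.05820 — 4 statements merged into one kernel-verified Lean document; each statement's English description precedes it below -/
import Mathlib

section
/- Let (X,d,μ) be an upper doubling metric measure space with dominating function λ satisfying λ(x,r) ≤ C_λ λ(y,r) whenever d(x,y) ≤ r. Then for every ball B ⊂ X, every k ∈ [2,∞), all x₁, x₂ ∈ B and every y ∈ X ∖ (kB), one has λ(x₁, d(x₁,y)) ≍ λ(x₂, d(x₂,y)); that is, there exist positive constants c and C, depending only on C_λ and not on B, k, x₁, x₂, y, such that c·λ(x₂, d(x₂,y)) ≤ λ(x₁, d(x₁,y)) ≤ C·λ(x₂, d(x₂,y)). -/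
open MeasureTheory Metric ENNReal Filter

noncomputable section

/-- A metric measure space of non-homogeneous type: `(X,d,μ)` is geometrically doubling
and upper doubling with dominating function `lam`. -/
structure NonHomSpace (X : Type*) [MetricSpace X] [MeasurableSpace X]
    (μ : MeasureTheory.Measure X) where
  lam : X → ℝ → ℝ
  Clam : ℝ
  N₀ : ℕ
  Clam_gt : 1 < Clam
  lam_pos : ∀ x r, 0 < r → 0 < lam x r
  lam_mono : ∀ x r₁ r₂, 0 < r₁ → r₁ ≤ r₂ → lam x r₁ ≤ lam x r₂
  measure_ball_le : ∀ x r, 0 < r → μ (ball x r) ≤ ENNReal.ofReal (lam x r)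
  lam_half : ∀ x r, 0 < r → lam x r ≤ Clam * lam x (r / 2)
  lam_comp : ∀ x y r, 0 < r → dist x y ≤ r → lam x r ≤ Clam * lam y r
  geom : ∀ (x : X) (r : ℝ), 0 < r → ∃ s : Finset X, s.card ≤ N₀ ∧
    ball x r ⊆ ⋃ y ∈ s, ball y (r / 2)

variable {X : Type*} [MetricSpace X] [MeasurableSpace X] [BorelSpace X]

/-- The discrete coefficient `K̃^{(ρ)}_{B,S}` for balls `B = B(cB,rB) ⊆ S` with radius `rS`. -/
def Ktilde (μ : Measure X) (lam : X → ℝ → ℝ) (ρ : ℝ) (cB : X) (rB rS : ℝ) : ℝ :=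
  1 + ∑ k ∈ Finset.Icc (-(⌊Real.logb ρ 2⌋)) ⌈Real.logb ρ (rS / rB)⌉,
      (μ (ball cB (ρ ^ k * rB))).toReal / lam cB (ρ ^ k * rB)

/-- `f` satisfies the `R̃BMO_{ρ,γ}(μ)` conditions with family of numbers `fB` and constant `C`. -/
def IsRBMOWith (μ : Measure X) (lam : X → ℝ → ℝ) (ρ γ : ℝ) (f : X → ℝ)
    (fB : X → ℝ → ℝ) (C : ℝ) : Prop :=
  (∀ c r, 0 < r →
    ∫ x in ball c r, |f x - fB c r| ∂μ ≤ C * (μ (ball c (ρ * r))).toReal) ∧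
  (∀ c r c' r', 0 < r → 0 < r' → ball c r ⊆ ball c' r' →
    |fB c r - fB c' r'| ≤ C * Ktilde μ lam ρ c r r' ^ γ)

/-- Membership in `R̃BMO_{ρ,γ}(μ)`. -/
def MemRBMO (μ : Measure X) (lam : X → ℝ → ℝ) (ρ γ : ℝ) (f : X → ℝ) : Prop :=
  ∃ C : ℝ, 0 ≤ C ∧ ∃ fB : X → ℝ → ℝ, IsRBMOWith μ lam ρ γ f fB C

/-- The `R̃BMO_{ρ,γ}(μ)` norm. -/
def rbmoNorm (μ : Measure X) (lam : X → ℝ → ℝ) (ρ γ : ℝ) (f : X → ℝ) : ℝ :=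
  sInf {C : ℝ | 0 ≤ C ∧ ∃ fB : X → ℝ → ℝ, IsRBMOWith μ lam ρ γ f fB C}

/-- A `(2,1,2)_λ`-atomic block `h` with `|h| = A`. -/
def IsAtomicBlock (μ : Measure X) (lam : X → ℝ → ℝ) (h : X → ℝ) (A : ℝ) : Prop :=
  ∃ (cB c₁ c₂ : X) (rB r₁ r₂ l₁ l₂ : ℝ) (a₁ a₂ : X → ℝ),
    0 < rB ∧ 0 < r₁ ∧ 0 < r₂ ∧
    Integrable h μ ∧
    Function.support h ⊆ ball cB rB ∧
    (∫ x, h x ∂μ) = 0 ∧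
    (∀ x, h x = l₁ * a₁ x + l₂ * a₂ x) ∧
    Function.support a₁ ⊆ ball c₁ r₁ ∧ ball c₁ r₁ ⊆ ball cB rB ∧
    Function.support a₂ ⊆ ball c₂ r₂ ∧ ball c₂ r₂ ⊆ ball cB rB ∧
    eLpNorm a₁ 2 μ ≤ ENNReal.ofReal
      ((μ (ball c₁ (2 * r₁))).toReal ^ (-(1/2 : ℝ)) * (Ktilde μ lam 2 c₁ r₁ rB)⁻¹) ∧
    eLpNorm a₂ 2 μ ≤ ENNReal.ofReal
      ((μ (ball c₂ (2 * r₂))).toReal ^ (-(1/2 : ℝ)) * (Ktilde μ lam 2 c₂ r₂ rB)⁻¹) ∧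
    A = |l₁| + |l₂|

/-- Membership in the atomic Hardy space `H̃¹(μ)`. -/
def MemH1 (μ : Measure X) (lam : X → ℝ → ℝ) (f : X → ℝ) : Prop :=
  Integrable f μ ∧
  ∃ (h : ℕ → X → ℝ) (A : ℕ → ℝ),
    (∀ i, IsAtomicBlock μ lam (h i) (A i)) ∧ Summable A ∧
    Tendsto (fun n => eLpNorm (fun x => f x - ∑ i ∈ Finset.range n, h i x) 1 μ)
      atTop (nhds 0)

/-- The `H̃¹(μ)` norm. -/
def H1Norm (μ : Measure X) (lam : X → ℝ → ℝ) (f : X → ℝ) : ℝ :=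
  sInf {s : ℝ | ∃ (h : ℕ → X → ℝ) (A : ℕ → ℝ),
    (∀ i, IsAtomicBlock μ lam (h i) (A i)) ∧ Summable A ∧
    Tendsto (fun n => eLpNorm (fun x => f x - ∑ i ∈ Finset.range n, h i x) 1 μ)
      atTop (nhds 0) ∧ s = ∑' i, A i}

/-- `L^∞_b(μ)`: bounded functions with bounded support. -/
def MemLinftyB (μ : Measure X) (f : X → ℝ) : Prop :=
  MemLp f ⊤ μ ∧ Bornology.IsBounded (Function.support f)

/-- `β_ρ`. -/
def betaRho (Clam : ℝ) (N₀ : ℕ) (ρ : ℝ) : ℝ :=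
  ρ ^ (3 * max (Real.logb 2 (N₀ : ℝ)) (Real.logb 2 Clam)) +
    max (5 * ρ) 30 ^ Real.logb 2 (N₀ : ℝ) + max (3 * ρ) 30 ^ Real.logb 2 Clam

/-- The ball `B(c, α r)` is `(α,β)`-doubling. -/
def IsDoubling (μ : Measure X) (α β : ℝ) (c : X) (r : ℝ) : Prop :=
  μ (ball c (α * r)) ≤ ENNReal.ofReal β * μ (ball c r)

/-- smallest `j` with `α^j B` `(α,β)`-doubling. -/
def doublingIdx (μ : Measure X) (α β : ℝ) (c : X) (r : ℝ) : ℕ :=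
  sInf {j : ℕ | IsDoubling μ α β c (α ^ j * r)}

/-- radius of `B̃^α`, the smallest `(α,β)`-doubling ball of the form `α^j B`. -/
def tildeRad (μ : Measure X) (α β : ℝ) (c : X) (r : ℝ) : ℝ :=
  α ^ doublingIdx μ α β c r * r

/-- mean of `f` over `E`. -/
def mAvg (μ : Measure X) (E : Set X) (f : X → ℝ) : ℝ :=
  (∫ y in E, f y ∂μ) / (μ E).toReal

/-- the sharp maximal function `M^♯ f`. -/
def sharpMax (μ : Measure X) (lam : X → ℝ → ℝ) (β : ℝ) (f : X → ℝ) (x : X) : ℝ≥0∞ :=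
  (⨆ (c : X) (r : ℝ) (_ : 0 < r) (_ : x ∈ ball c r),
    (∫⁻ y in ball c r,
        ENNReal.ofReal |f y - mAvg μ (ball c (tildeRad μ 6 β c r)) f| ∂μ) /
      μ (ball c (6 * r))) +
  ⨆ (c : X) (r : ℝ) (c' : X) (r' : ℝ) (_ : 0 < r) (_ : 0 < r')
      (_ : x ∈ ball c r) (_ : ball c r ⊆ ball c' r')
      (_ : IsDoubling μ 6 β c r) (_ : IsDoubling μ 6 β c' r'),
    ENNReal.ofReal (|mAvg μ (ball c r) f - mAvg μ (ball c' r') f| /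
      Ktilde μ lam 6 c r r')

/-- the non-centered doubling maximal operator `N`. -/
def NMax (μ : Measure X) (β : ℝ) (f : X → ℝ) (x : X) : ℝ≥0∞ :=
  ⨆ (c : X) (r : ℝ) (_ : 0 < r) (_ : x ∈ ball c r) (_ : IsDoubling μ 6 β c r),
    (∫⁻ y in ball c r, ENNReal.ofReal |f y| ∂μ) / μ (ball c r)

/-- the maximal operator `M_{r,(η)}`. -/
def Mmax (μ : Measure X) (r η : ℝ) (f : X → ℝ) (x : X) : ℝ≥0∞ :=
  ⨆ (c : X) (rad : ℝ) (_ : 0 < rad) (_ : x ∈ ball c rad),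
    ((∫⁻ y in ball c rad, ENNReal.ofReal (|f y| ^ r) ∂μ) / μ (ball c (η * rad))) ^ (1 / r)

/-- the weak `L^p` quasinorm of an `ℝ≥0∞`-valued function. -/
def wNorm (μ : Measure X) (p : ℝ) (g : X → ℝ≥0∞) : ℝ≥0∞ :=
  ⨆ (t : ℝ) (_ : 0 < t), ENNReal.ofReal t * μ {x | ENNReal.ofReal t < g x} ^ (1 / p)

/-- the maximal Calderón–Zygmund operator `T_*`. -/
def Tstar (μ : Measure X) (K : X → X → ℝ) (f : X → ℝ) (x : X) : ℝ≥0∞ :=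
  ⨆ (ε : ℝ) (_ : 0 < ε),
    ENNReal.ofReal |∫ y in {y | ε < dist x y}, K x y * f y ∂μ|

end
/-- comparability of the dominating function at points of a ball. -/
theorem statement0 (X : Type*) [MetricSpace X] [MeasurableSpace X] [BorelSpace X]
    (μ : MeasureTheory.Measure X) (lam : X → ℝ → ℝ) (Clam : ℝ) (hClam : 1 < Clam)
    (hpos : ∀ x r, 0 < r → 0 < lam x r)
    (hmono : ∀ x r₁ r₂, 0 < r₁ → r₁ ≤ r₂ → lam x r₁ ≤ lam x r₂)
    (hdom : ∀ x r, 0 < r → μ (Metric.ball x r) ≤ ENNReal.ofReal (lam x r))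
    (hhalf : ∀ x r, 0 < r → lam x r ≤ Clam * lam x (r / 2))
    (hcomp : ∀ x y r, 0 < r → dist x y ≤ r → lam x r ≤ Clam * lam y r) :
    ∃ c C : ℝ, 0 < c ∧ 0 < C ∧
      ∀ (cB : X) (rB k : ℝ), 0 < rB → 2 ≤ k →
        ∀ x₁ ∈ Metric.ball cB rB, ∀ x₂ ∈ Metric.ball cB rB,
          ∀ y ∉ Metric.ball cB (k * rB),
            c * lam x₂ (dist x₂ y) ≤ lam x₁ (dist x₁ y) ∧
            lam x₁ (dist x₁ y) ≤ C * lam x₂ (dist x₂ y) := by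
  have hC0 : (0:ℝ) < Clam := lt_trans one_pos hClam
  have key : ∀ (cB : X) (rB k : ℝ), 0 < rB → 2 ≤ k →
      ∀ x₁ ∈ Metric.ball cB rB, ∀ x₂ ∈ Metric.ball cB rB,
      ∀ y ∉ Metric.ball cB (k * rB),
        lam x₁ (dist x₁ y) ≤ Clam ^ 3 * lam x₂ (dist x₂ y) := by
    intro cB rB k hrB hk x₁ hx₁ x₂ hx₂ y hy
    simp only [Metric.mem_ball, not_lt] at hx₁ hx₂ hy
    have h2c : dist x₂ cB = dist cB x₂ := dist_comm _ _
    have h1c : dist x₁ cB = dist cB x₁ := dist_comm _ _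
    have hyc : dist y cB = dist cB y := dist_comm _ _
    have ht2 : dist cB y ≤ dist cB x₂ + dist x₂ y := dist_triangle _ _ _
    have ht1 : dist cB y ≤ dist cB x₁ + dist x₁ y := dist_triangle _ _ _
    have hd₂ : rB ≤ dist x₂ y := by nlinarith
    have hd₁pos : 0 < dist x₁ y := by nlinarith
    have hd₂pos : 0 < dist x₂ y := lt_of_lt_of_le hrB hd₂
    have h12 : dist x₁ x₂ ≤ 2 * dist x₂ y := by
      have := dist_triangle x₁ cB x₂
      nlinarith
    have hd₁le : dist x₁ y ≤ 4 * dist x₂ y := by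
      have := dist_triangle x₁ x₂ y
      nlinarith
    have s1 : lam x₁ (dist x₁ y) ≤ lam x₁ (4 * dist x₂ y) :=
      hmono _ _ _ hd₁pos hd₁le
    have s2 : lam x₁ (4 * dist x₂ y) ≤ Clam * lam x₁ (2 * dist x₂ y) := by
      have := hhalf x₁ (4 * dist x₂ y) (by linarith)
      have h42 : 4 * dist x₂ y / 2 = 2 * dist x₂ y := by ring
      rwa [h42] at this
    have s3 : lam x₁ (2 * dist x₂ y) ≤ Clam * lam x₂ (2 * dist x₂ y) :=
      hcomp x₁ x₂ _ (by linarith) h12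
    have s4 : lam x₂ (2 * dist x₂ y) ≤ Clam * lam x₂ (dist x₂ y) := by
      have := hhalf x₂ (2 * dist x₂ y) (by linarith)
      have h21 : 2 * dist x₂ y / 2 = dist x₂ y := by ring
      rwa [h21] at this
    calc lam x₁ (dist x₁ y) ≤ lam x₁ (4 * dist x₂ y) := s1
      _ ≤ Clam * lam x₁ (2 * dist x₂ y) := s2
      _ ≤ Clam * (Clam * lam x₂ (2 * dist x₂ y)) :=
          mul_le_mul_of_nonneg_left s3 hC0.le
      _ ≤ Clam * (Clam * (Clam * lam x₂ (dist x₂ y))) :=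
          mul_le_mul_of_nonneg_left (mul_le_mul_of_nonneg_left s4 hC0.le) hC0.le
      _ = Clam ^ 3 * lam x₂ (dist x₂ y) := by ring
  have hC3 : (0:ℝ) < Clam ^ 3 := by positivity
  refine ⟨(Clam ^ 3)⁻¹, Clam ^ 3, by positivity, hC3, ?_⟩
  intro cB rB k hrB hk x₁ hx₁ x₂ hx₂ y hy
  refine ⟨?_, key cB rB k hrB hk x₁ hx₁ x₂ hx₂ y hy⟩
  have h := key cB rB k hrB hk x₂ hx₂ x₁ hx₁ y hy
  rw [inv_mul_le_iff₀ hC3]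
  linarith [h]
end

section
/- Let (X,d,μ) be a metric measure space of non-homogeneous type and ρ ∈ (1,∞). Then there exists a positive constant c_{ρ,ν}, depending on ρ and ν, such that for all balls B ⊂ R ⊂ S in X one has K̃^{(ρ)}_{B,S} ≤ K̃^{(ρ)}_{B,R} + c_{ρ,ν} · K̃^{(ρ)}_{R,S}. -/
open MeasureTheory Metric ENNReal Filter

section Statement2Aux

private lemma le_zpow_iff_logb_le' {ρ t : ℝ} (hρ : 1 < ρ) (ht : 0 < t) (n : ℤ) :
    t ≤ ρ ^ n ↔ Real.logb ρ t ≤ (n : ℝ) := by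
  rw [← Real.rpow_intCast ρ n, ← Real.logb_le_iff_le_rpow hρ ht]

private lemma zpow_lt_of_lt_logb' {ρ t : ℝ} (hρ : 1 < ρ) (ht : 0 < t) {n : ℤ}
    (h : (n : ℝ) < Real.logb ρ t) : ρ ^ n < t := by
  rw [← Real.rpow_intCast ρ n]
  exact (Real.lt_logb_iff_rpow_lt hρ ht).mp h

private lemma le_logb_of_zpow_le' {ρ t : ℝ} (hρ : 1 < ρ) (ht : 0 < t) {n : ℤ}
    (h : ρ ^ n ≤ t) : (n : ℝ) ≤ Real.logb ρ t := by
  rw [← Real.rpow_intCast ρ n] at h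
  exact (Real.le_logb_iff_rpow_le hρ ht).mpr h

private lemma sum_le_mul_sum_of_fiber' (s t : Finset ℤ) (f g : ℤ → ℝ)
    (jf : ℤ → ℤ) (C M : ℝ) (hC : 0 ≤ C) (hg : ∀ j, 0 ≤ g j)
    (hmap : ∀ k ∈ s, jf k ∈ t)
    (hfib : ∀ j, (((s.filter (fun k => jf k = j)).card : ℝ)) ≤ M)
    (hcomp : ∀ k ∈ s, f k ≤ C * g (jf k)) :
    ∑ k ∈ s, f k ≤ C * M * ∑ j ∈ t, g j := by
  calc ∑ k ∈ s, f k ≤ ∑ k ∈ s, C * g (jf k) := Finset.sum_le_sum hcomp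
    _ = C * ∑ k ∈ s, g (jf k) := by rw [Finset.mul_sum]
    _ ≤ C * (M * ∑ j ∈ t, g j) := by
        refine mul_le_mul_of_nonneg_left ?_ hC
        have h1 : ∑ k ∈ s, g (jf k)
            = ∑ j ∈ t, ∑ k ∈ s.filter (fun k => jf k = j), g (jf k) :=
          (Finset.sum_fiberwise_of_maps_to hmap _).symm
        rw [h1, Finset.mul_sum]
        refine Finset.sum_le_sum (fun j _ => ?_)
        have h2 : ∑ k ∈ s.filter (fun k => jf k = j), g (jf k)
            = (s.filter (fun k => jf k = j)).card • g j := by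
          rw [Finset.sum_congr rfl (fun k hk => by rw [(Finset.mem_filter.mp hk).2]),
            Finset.sum_const]
        rw [h2, nsmul_eq_mul]
        exact mul_le_mul_of_nonneg_right (hfib j) (hg j)
    _ = C * M * ∑ j ∈ t, g j := by ring

private lemma sum_Icc_le' (g : ℤ → ℝ) (a NRS : ℤ) (ha : 0 ≤ a)
    (hg0 : ∀ j, 0 ≤ g j) (hg1 : ∀ j, g j ≤ 1) :
    ∑ j ∈ Finset.Icc 1 (NRS + a + 3), g j
      ≤ ∑ j ∈ Finset.Icc (-a) NRS, g j + ((a : ℝ) + 3) := by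
  have hsub : Finset.Icc (1:ℤ) (NRS + a + 3)
      ⊆ Finset.Icc (-a) NRS ∪ Finset.Ioc NRS (NRS + a + 3) := by
    intro k hk
    simp only [Finset.mem_Icc, Finset.mem_union, Finset.mem_Ioc] at *
    omega
  have hd : Disjoint (Finset.Icc (-a) NRS) (Finset.Ioc NRS (NRS + a + 3)) := by
    rw [Finset.disjoint_left]
    intro k h1 h2
    simp only [Finset.mem_Icc] at h1
    simp only [Finset.mem_Ioc] at h2
    omega
  have hlast : ∑ j ∈ Finset.Ioc NRS (NRS + a + 3), g j ≤ ((a:ℝ) + 3) := by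
    calc ∑ j ∈ Finset.Ioc NRS (NRS + a + 3), g j
        ≤ ∑ _j ∈ Finset.Ioc NRS (NRS + a + 3), (1:ℝ) :=
          Finset.sum_le_sum (fun j _ => hg1 j)
      _ = ((Finset.Ioc NRS (NRS + a + 3)).card : ℝ) := by
          rw [Finset.sum_const]; simp
      _ = ((a:ℝ) + 3) := by
          rw [Int.card_Ioc, show NRS + a + 3 - NRS = a + 3 by ring]
          have h4 : (((a+3).toNat : ℤ)) = a + 3 := Int.toNat_of_nonneg (by omega)
          exact_mod_cast congrArg (fun z : ℤ => (z : ℝ)) h4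
  calc ∑ j ∈ Finset.Icc 1 (NRS + a + 3), g j
      ≤ ∑ j ∈ (Finset.Icc (-a) NRS ∪ Finset.Ioc NRS (NRS + a + 3)), g j :=
        Finset.sum_le_sum_of_subset_of_nonneg hsub (fun i _ _ => hg0 i)
    _ = ∑ j ∈ Finset.Icc (-a) NRS, g j + ∑ j ∈ Finset.Ioc NRS (NRS + a + 3), g j :=
        Finset.sum_union hd
    _ ≤ _ := by linarith

private lemma lam_iter' {X : Type*} [MetricSpace X] [MeasurableSpace X] [BorelSpace X]
    {μ : MeasureTheory.Measure X} (H : NonHomSpace X μ) (x : X) (r : ℝ) (hr : 0 < r) :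
    ∀ m : ℕ, H.lam x r ≤ H.Clam ^ m * H.lam x (r / 2 ^ m)
  | 0 => by simp
  | (m+1) => by
      have hC : (0:ℝ) < H.Clam := lt_trans one_pos H.Clam_gt
      have h1 := lam_iter' H x r hr m
      have h2 := H.lam_half x (r / 2 ^ m) (by positivity)
      calc H.lam x r ≤ H.Clam ^ m * H.lam x (r / 2 ^ m) := h1
        _ ≤ H.Clam ^ m * (H.Clam * H.lam x (r / 2 ^ m / 2)) :=
            mul_le_mul_of_nonneg_left h2 (by positivity)
        _ = H.Clam ^ (m+1) * H.lam x (r / 2 ^ (m+1)) := by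
            rw [div_div, ← pow_succ]; ring

end Statement2Aux
set_option maxHeartbeats 1000000 in
/-- `K̃^{(ρ)}_{B,S} ≤ K̃^{(ρ)}_{B,R} + c K̃^{(ρ)}_{R,S}` for balls `B ⊆ R ⊆ S`. -/

theorem statement2 (X : Type*) [MetricSpace X] [MeasurableSpace X] [BorelSpace X]
    (μ : MeasureTheory.Measure X) (H : NonHomSpace X μ) (ρ : ℝ) (hρ : 1 < ρ) :
    ∃ c : ℝ, 0 < c ∧
      ∀ (cB cR cS : X) (rB rR rS : ℝ), 0 < rB → 0 < rR → 0 < rS →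
        Metric.ball cB rB ⊆ Metric.ball cR rR →
        Metric.ball cR rR ⊆ Metric.ball cS rS →
        Ktilde μ H.lam ρ cB rB rS ≤
          Ktilde μ H.lam ρ cB rB rR + c * Ktilde μ H.lam ρ cR rR rS := by
  obtain ⟨m, hm⟩ := pow_unbounded_of_one_lt (R := ℝ) (2 * ρ) one_lt_two
  have hρ0 : (0:ℝ) < ρ := lt_trans one_pos hρ
  have hC1 : 1 < H.Clam := H.Clam_gt
  have hCpos : (0:ℝ) < H.Clam := lt_trans one_pos hC1
  set a : ℤ := ⌊Real.logb ρ 2⌋ with ha_def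
  have ha0 : 0 ≤ a := Int.floor_nonneg.mpr (Real.logb_nonneg hρ one_le_two)
  have haR : (0:ℝ) ≤ (a:ℝ) := by exact_mod_cast ha0
  have hlogb_lt : Real.logb ρ 2 < (a:ℝ) + 1 := by
    rw [ha_def]; push_cast; exact Int.lt_floor_add_one _
  set C0 : ℝ := H.Clam ^ (m + 1) with hC0_def
  have hC0pos : (0:ℝ) < C0 := by positivity
  refine ⟨C0 * ((a:ℝ) + 2) * ((a:ℝ) + 4),
    mul_pos (mul_pos hC0pos (by linarith)) (by linarith), ?_⟩
  intro cB cR cS rB rR rS hrB hrR hrS hBR hRS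
  unfold Ktilde
  rw [← ha_def]
  set NBR : ℤ := ⌈Real.logb ρ (rR / rB)⌉ with hNBR_def
  set NBS : ℤ := ⌈Real.logb ρ (rS / rB)⌉ with hNBS_def
  set NRS : ℤ := ⌈Real.logb ρ (rS / rR)⌉ with hNRS_def
  set T : ℤ := NRS + a + 3 with hT_def
  set f : ℤ → ℝ :=
    fun k => (μ (Metric.ball cB (ρ ^ k * rB))).toReal / H.lam cB (ρ ^ k * rB) with hf_def
  set g : ℤ → ℝ :=
    fun j => (μ (Metric.ball cR (ρ ^ j * rR))).toReal / H.lam cR (ρ ^ j * rR) with hg_def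
  set jf : ℤ → ℤ := fun k => ⌈Real.logb ρ ((ρ ^ k * rB + rR) / rR)⌉ with hjf_def
  have hzpow : ∀ k : ℤ, (0:ℝ) < ρ ^ k := fun k => zpow_pos hρ0 k
  have hμfin : ∀ (c : X) (r : ℝ), 0 < r → μ (Metric.ball c r) ≠ ⊤ := fun c r hr =>
    ne_top_of_le_ne_top ENNReal.ofReal_ne_top (H.measure_ball_le c r hr)
  have hf0 : ∀ k, 0 ≤ f k := fun k =>
    div_nonneg ENNReal.toReal_nonneg (H.lam_pos _ _ (mul_pos (hzpow k) hrB)).le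
  have hg0 : ∀ j, 0 ≤ g j := fun j =>
    div_nonneg ENNReal.toReal_nonneg (H.lam_pos _ _ (mul_pos (hzpow j) hrR)).le
  have hg1 : ∀ j, g j ≤ 1 := by
    intro j
    have hrr : (0:ℝ) < ρ ^ j * rR := mul_pos (hzpow j) hrR
    have hpos := H.lam_pos cR _ hrr
    rw [hg_def]
    simp only
    rw [div_le_one hpos]
    calc (μ (Metric.ball cR (ρ ^ j * rR))).toReal
        ≤ (ENNReal.ofReal (H.lam cR (ρ ^ j * rR))).toReal :=
          ENNReal.toReal_mono ENNReal.ofReal_ne_top (H.measure_ball_le cR _ hrr)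
      _ ≤ H.lam cR (ρ ^ j * rR) := le_of_eq (ENNReal.toReal_ofReal hpos.le)
  have hdBR : dist cB cR < rR := by
    have := hBR (Metric.mem_ball_self hrB)
    simpa [Metric.mem_ball] using this
  have hrR_le : rR ≤ ρ ^ NBR * rB := by
    have h1 : rR / rB ≤ ρ ^ NBR := by
      rw [hNBR_def]
      exact (le_zpow_iff_logb_le' hρ (div_pos hrR hrB) _).mpr (Int.le_ceil _)
    calc rR = rR / rB * rB := by field_simp
      _ ≤ ρ ^ NBR * rB := mul_le_mul_of_nonneg_right h1 hrB.le
  have hNBSb : ρ ^ NBS * rB < ρ * rS := by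
    have hceil : ((NBS:ℝ)) < Real.logb ρ (rS / rB) + 1 := by
      rw [hNBS_def]; exact_mod_cast Int.ceil_lt_add_one _
    have h2 : ρ ^ (NBS - 1) < rS / rB :=
      zpow_lt_of_lt_logb' hρ (div_pos hrS hrB) (by push_cast; linarith)
    have h3 : ρ ^ NBS = ρ ^ (NBS - 1) * ρ := by
      rw [← zpow_add_one₀ (ne_of_gt hρ0), sub_add_cancel]
    have h4 : ρ ^ (NBS - 1) * rB < rS := (lt_div_iff₀ hrB).mp h2
    rw [h3]
    nlinarith [hzpow (NBS - 1)]
  -- key per-k facts on `Finset.Ioc NBR NBS`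
  have hkey : ∀ k ∈ Finset.Ioc NBR NBS,
      (1 ≤ jf k ∧ jf k ≤ T) ∧ f k ≤ C0 * g (jf k) ∧
        (ρ ^ k * rB + rR ≤ ρ ^ (jf k) * rR ∧ ρ ^ (jf k) * rR ≤ 2 * ρ * (ρ ^ k * rB)) := by
    intro k hk
    rw [Finset.mem_Ioc] at hk
    obtain ⟨hk1, hk2⟩ := hk
    have h_rRk : rR ≤ ρ ^ k * rB :=
      le_trans hrR_le (mul_le_mul_of_nonneg_right (zpow_le_zpow_right₀ hρ.le hk1.le) hrB.le)
    have hX : (0:ℝ) < ρ ^ k * rB := mul_pos (hzpow k) hrB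
    have ht : (0:ℝ) < (ρ ^ k * rB + rR) / rR := by positivity
    have hA : ρ ^ k * rB + rR ≤ ρ ^ (jf k) * rR := by
      have h1 : (ρ ^ k * rB + rR) / rR ≤ ρ ^ (jf k) := by
        rw [hjf_def]
        exact (le_zpow_iff_logb_le' hρ ht _).mpr (Int.le_ceil _)
      calc ρ ^ k * rB + rR = (ρ ^ k * rB + rR) / rR * rR := by field_simp
        _ ≤ ρ ^ (jf k) * rR := mul_le_mul_of_nonneg_right h1 hrR.le
    have hB : ρ ^ (jf k) * rR ≤ 2 * ρ * (ρ ^ k * rB) := by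
      have hceil : ((jf k : ℝ)) < Real.logb ρ ((ρ ^ k * rB + rR) / rR) + 1 := by
        rw [hjf_def]; exact_mod_cast Int.ceil_lt_add_one _
      have hlt : ρ ^ (jf k - 1) < (ρ ^ k * rB + rR) / rR :=
        zpow_lt_of_lt_logb' hρ ht (by push_cast; linarith)
      have h5 : ρ ^ (jf k - 1) * rR < ρ ^ k * rB + rR := by
        have h6 := mul_lt_mul_of_pos_right hlt hrR
        rwa [div_mul_cancel₀ _ (ne_of_gt hrR)] at h6
      have h3 : ρ ^ (jf k) = ρ ^ (jf k - 1) * ρ := by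
        rw [← zpow_add_one₀ (ne_of_gt hρ0), sub_add_cancel]
      rw [h3]
      nlinarith [mul_lt_mul_of_pos_right h5 hρ0, mul_le_mul_of_nonneg_left h_rRk hρ0.le]
    have hj1 : 1 ≤ jf k := by
      have ht2 : (2:ℝ) ≤ (ρ ^ k * rB + rR) / rR := by
        rw [le_div_iff₀ hrR]; linarith
      have : (0:ℝ) < Real.logb ρ ((ρ ^ k * rB + rR) / rR) :=
        Real.logb_pos hρ (by linarith)
      rw [hjf_def]
      exact Int.ceil_pos.mpr this
    have hjT : jf k ≤ T := by
      have hk_le : ρ ^ k ≤ ρ ^ NBS := zpow_le_zpow_right₀ hρ.le hk2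
      have h6 : ρ ^ (jf k) * rR < 2 * ρ * (ρ * rS) := by
        calc ρ ^ (jf k) * rR ≤ 2 * ρ * (ρ ^ k * rB) := hB
          _ ≤ 2 * ρ * (ρ ^ NBS * rB) := by
              nlinarith [mul_le_mul_of_nonneg_right hk_le hrB.le]
          _ < 2 * ρ * (ρ * rS) := by nlinarith [hNBSb]
      have h7 : ρ ^ (jf k - 2) < 2 * (rS / rR) := by
        have hz2 : ρ ^ (jf k - 2) * (ρ * ρ) = ρ ^ (jf k) := by
          rw [show (ρ:ℝ) * ρ = ρ ^ (2:ℤ) by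
              rw [show (2:ℤ) = (1:ℤ) + 1 from rfl, zpow_add_one₀ (ne_of_gt hρ0), zpow_one],
            ← zpow_add₀ (ne_of_gt hρ0), sub_add_cancel]
        have h8 : ρ ^ (jf k - 2) * (ρ * ρ) * rR < 2 * ρ * (ρ * rS) := by rw [hz2]; exact h6
        rw [show (2:ℝ) * (rS / rR) = 2 * rS / rR by ring, lt_div_iff₀ hrR]
        nlinarith [hzpow (jf k - 2), mul_pos hρ0 hρ0, h8]
      have h9 : ((jf k - 2 : ℤ) : ℝ) ≤ Real.logb ρ (2 * (rS / rR)) :=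
        le_logb_of_zpow_le' hρ (by positivity) h7.le
      have h10 : Real.logb ρ (2 * (rS / rR)) = Real.logb ρ 2 + Real.logb ρ (rS / rR) :=
        Real.logb_mul two_ne_zero (ne_of_gt (div_pos hrS hrR))
      have h11 : Real.logb ρ (rS / rR) ≤ ((NRS : ℤ) : ℝ) := by
        rw [hNRS_def]; exact Int.le_ceil _
      have h12 : ((jf k : ℤ) : ℝ) < ((T : ℤ) : ℝ) := by
        rw [hT_def]; push_cast at *; linarith
      exact le_of_lt (by exact_mod_cast h12)
    have hterm : f k ≤ C0 * g (jf k) := by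
      have hS : (0:ℝ) < ρ ^ (jf k) * rR := mul_pos (hzpow _) hrR
      have hball : Metric.ball cB (ρ ^ k * rB) ⊆ Metric.ball cR (ρ ^ (jf k) * rR) := by
        intro x hx
        rw [Metric.mem_ball] at *
        calc dist x cR ≤ dist x cB + dist cB cR := dist_triangle _ _ _
          _ < ρ ^ k * rB + rR := by linarith
          _ ≤ ρ ^ (jf k) * rR := hA
      have hμ : (μ (Metric.ball cB (ρ ^ k * rB))).toReal
          ≤ (μ (Metric.ball cR (ρ ^ (jf k) * rR))).toReal :=
        ENNReal.toReal_mono (hμfin cR _ hS) (measure_mono hball)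
      have hLB := H.lam_pos cB _ hX
      have hLR := H.lam_pos cR _ hS
      have hlam : H.lam cR (ρ ^ (jf k) * rR) ≤ C0 * H.lam cB (ρ ^ k * rB) := by
        have hs1 : H.lam cR (ρ ^ (jf k) * rR) ≤ H.Clam * H.lam cB (ρ ^ (jf k) * rR) := by
          apply H.lam_comp cR cB _ hS
          rw [dist_comm]
          calc dist cB cR ≤ rR := hdBR.le
            _ ≤ ρ ^ (jf k) * rR := by nlinarith [hX]
        have hs2 : H.lam cB (ρ ^ (jf k) * rR)
            ≤ H.Clam ^ m * H.lam cB (ρ ^ (jf k) * rR / 2 ^ m) := lam_iter' H cB _ hS m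
        have hs3 : H.lam cB (ρ ^ (jf k) * rR / 2 ^ m) ≤ H.lam cB (ρ ^ k * rB) := by
          apply H.lam_mono cB _ _ (by positivity)
          rw [div_le_iff₀ (by positivity)]
          calc ρ ^ (jf k) * rR ≤ 2 * ρ * (ρ ^ k * rB) := hB
            _ ≤ ρ ^ k * rB * 2 ^ m := by nlinarith [hX]
        calc H.lam cR (ρ ^ (jf k) * rR) ≤ H.Clam * H.lam cB (ρ ^ (jf k) * rR) := hs1
          _ ≤ H.Clam * (H.Clam ^ m * H.lam cB (ρ ^ (jf k) * rR / 2 ^ m)) :=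
              mul_le_mul_of_nonneg_left hs2 hCpos.le
          _ ≤ H.Clam * (H.Clam ^ m * H.lam cB (ρ ^ k * rB)) := by
              refine mul_le_mul_of_nonneg_left ?_ hCpos.le
              exact mul_le_mul_of_nonneg_left hs3 (by positivity)
          _ = C0 * H.lam cB (ρ ^ k * rB) := by rw [hC0_def]; ring
      rw [hf_def, hg_def]
      simp only
      rw [← mul_div_assoc, div_le_div_iff₀ hLB hLR]
      calc (μ (Metric.ball cB (ρ ^ k * rB))).toReal * H.lam cR (ρ ^ (jf k) * rR)
          ≤ (μ (Metric.ball cR (ρ ^ (jf k) * rR))).toReal * H.lam cR (ρ ^ (jf k) * rR) :=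
            mul_le_mul_of_nonneg_right hμ hLR.le
        _ ≤ (μ (Metric.ball cR (ρ ^ (jf k) * rR))).toReal * (C0 * H.lam cB (ρ ^ k * rB)) :=
            mul_le_mul_of_nonneg_left hlam ENNReal.toReal_nonneg
        _ = C0 * (μ (Metric.ball cR (ρ ^ (jf k) * rR))).toReal * H.lam cB (ρ ^ k * rB) := by
            ring
    exact ⟨⟨hj1, hjT⟩, hterm, hA, hB⟩
  -- fiber cardinality bound
  have hfib : ∀ j : ℤ,
      ((((Finset.Ioc NBR NBS).filter (fun k => jf k = j)).card : ℝ)) ≤ (a:ℝ) + 2 := by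
    intro j
    have hcard : (((Finset.Ioc NBR NBS).filter (fun k => jf k = j)).card : ℤ) ≤ a + 2 := by
      set F := (Finset.Ioc NBR NBS).filter (fun k => jf k = j) with hF_def
      rcases F.eq_empty_or_nonempty with h | h
      · simp [h]; omega
      · have hsub : F ⊆ Finset.Icc (F.min' h) (F.min' h + (a + 1)) := by
          intro k hk
          rw [Finset.mem_Icc]
          refine ⟨F.min'_le k hk, ?_⟩
          have hkmem := Finset.mem_filter.mp hk
          have hminmem := Finset.mem_filter.mp (F.min'_mem h)
          obtain ⟨hkIoc, hkj⟩ := hkmem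
          obtain ⟨hmIoc, hmj⟩ := hminmem
          set k1 := F.min' h
          have e1 : ρ ^ k * rB ≤ ρ ^ (jf k) * rR := by
            have := ((hkey k hkIoc).2.2).1
            linarith
          have e2 : ρ ^ (jf k1) * rR ≤ 2 * ρ * (ρ ^ k1 * rB) := ((hkey k1 hmIoc).2.2).2
          rw [hkj, ← hmj] at e1
          have h2 : ρ ^ k ≤ 2 * ρ * ρ ^ k1 := by
            have h1 : ρ ^ k * rB ≤ (2 * ρ * ρ ^ k1) * rB := by nlinarith
            exact le_of_mul_le_mul_right (by linarith) hrB
          have hkk : ρ ^ (k - k1) ≤ 2 * ρ := by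
            rw [zpow_sub₀ (ne_of_gt hρ0), div_le_iff₀ (hzpow k1)]
            linarith
          have h4 : ((k - k1 : ℤ) : ℝ) ≤ Real.logb ρ (2 * ρ) :=
            le_logb_of_zpow_le' hρ (by positivity) hkk
          have h5 : Real.logb ρ (2 * ρ) = Real.logb ρ 2 + 1 := by
            rw [Real.logb_mul two_ne_zero (ne_of_gt hρ0), Real.logb_self_eq_one hρ]
          have h6 : ((k - k1 : ℤ) : ℝ) < ((a + 2 : ℤ) : ℝ) := by push_cast at *; linarith
          have h7 : k - k1 < a + 2 := by exact_mod_cast h6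
          omega
        calc (F.card : ℤ) ≤ ((Finset.Icc (F.min' h) (F.min' h + (a + 1))).card : ℤ) := by
              exact_mod_cast Finset.card_le_card hsub
          _ = a + 2 := by
              rw [Int.card_Icc]
              rw [show F.min' h + (a + 1) + 1 - F.min' h = a + 2 by ring]
              exact Int.toNat_of_nonneg (by omega)
    exact_mod_cast hcard
  -- assemble
  have hsum_split : ∑ k ∈ Finset.Icc (-a) NBS, f k
      ≤ ∑ k ∈ Finset.Icc (-a) NBR, f k + ∑ k ∈ Finset.Ioc NBR NBS, f k := by
    have hsub : Finset.Icc (-a) NBS ⊆ Finset.Icc (-a) NBR ∪ Finset.Ioc NBR NBS := by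
      intro k hk
      simp only [Finset.mem_Icc, Finset.mem_union, Finset.mem_Ioc] at *
      omega
    have hd : Disjoint (Finset.Icc (-a) NBR) (Finset.Ioc NBR NBS) := by
      rw [Finset.disjoint_left]
      intro k h1 h2
      simp only [Finset.mem_Icc] at h1
      simp only [Finset.mem_Ioc] at h2
      omega
    calc ∑ k ∈ Finset.Icc (-a) NBS, f k
        ≤ ∑ k ∈ (Finset.Icc (-a) NBR ∪ Finset.Ioc NBR NBS), f k :=
          Finset.sum_le_sum_of_subset_of_nonneg hsub (fun i _ _ => hf0 i)
      _ = _ := Finset.sum_union hd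
  have hmain : ∑ k ∈ Finset.Ioc NBR NBS, f k
      ≤ C0 * ((a:ℝ) + 2) * ∑ j ∈ Finset.Icc 1 T, g j := by
    apply sum_le_mul_sum_of_fiber' _ _ _ _ jf _ _ hC0pos.le hg0
    · intro k hk
      rw [Finset.mem_Icc]
      exact (hkey k hk).1
    · exact hfib
    · intro k hk
      exact (hkey k hk).2.1
  have hT_bound : ∑ j ∈ Finset.Icc 1 T, g j
      ≤ ∑ j ∈ Finset.Icc (-a) NRS, g j + ((a:ℝ) + 3) := by
    rw [hT_def]
    exact sum_Icc_le' g a NRS ha0 hg0 hg1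
  have hGnn : (0:ℝ) ≤ ∑ j ∈ Finset.Icc (-a) NRS, g j :=
    Finset.sum_nonneg (fun j _ => hg0 j)
  have hP : (0:ℝ) ≤ C0 * ((a:ℝ) + 2) := mul_nonneg hC0pos.le (by linarith)
  have hchain : ∑ k ∈ Finset.Ioc NBR NBS, f k
      ≤ C0 * ((a:ℝ) + 2) * ((a:ℝ) + 4) * (1 + ∑ j ∈ Finset.Icc (-a) NRS, g j) := by
    have h1 : ∑ k ∈ Finset.Ioc NBR NBS, f k
        ≤ C0 * ((a:ℝ) + 2) * (∑ j ∈ Finset.Icc (-a) NRS, g j + ((a:ℝ) + 3)) :=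
      le_trans hmain (mul_le_mul_of_nonneg_left hT_bound hP)
    have h2 : (∑ j ∈ Finset.Icc (-a) NRS, g j + ((a:ℝ) + 3))
        ≤ ((a:ℝ) + 4) * (1 + ∑ j ∈ Finset.Icc (-a) NRS, g j) := by
      nlinarith [mul_nonneg (show (0:ℝ) ≤ (a:ℝ) + 3 by linarith) hGnn]
    calc ∑ k ∈ Finset.Ioc NBR NBS, f k
        ≤ C0 * ((a:ℝ) + 2) * (∑ j ∈ Finset.Icc (-a) NRS, g j + ((a:ℝ) + 3)) := h1
      _ ≤ C0 * ((a:ℝ) + 2) * (((a:ℝ) + 4) * (1 + ∑ j ∈ Finset.Icc (-a) NRS, g j)) :=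
          mul_le_mul_of_nonneg_left h2 hP
      _ = C0 * ((a:ℝ) + 2) * ((a:ℝ) + 4) * (1 + ∑ j ∈ Finset.Icc (-a) NRS, g j) := by ring
  linarith [hsum_split, hchain]
end

section
/- Let (X,d,μ) be a metric measure space of non-homogeneous type, let γ₀ be a fixed constant with γ₀ > max{C_λ^{3 log₂ 6}, 6^{3n₀}}, let p ∈ [1,∞), f ∈ L^p(μ), and t ∈ (0,∞) (with the extra requirement t > γ₀^{1/p} ‖f‖_{L^p(μ)} / μ(X)^{1/p} when μ(X) < ∞). Then there exists a countable family {B_j}_j of pairwise disjoint balls in X such that: (1) for every j, (1/μ(6²B_j)) ∫_{B_j} |f(x)|^p dμ(x) > t^p/γ₀; (2) for every j and every η ∈ (2,∞), (1/μ(6²ηB_j)) ∫_{ηB_j} |f(x)|^p dμ(x) ≤ t^p/γ₀; and (3) |f(x)| ≤ t for μ-almost every x ∈ X ∖ (⋃_j 6B_j). -/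
open MeasureTheory Metric ENNReal Filter

section NHAux
open TopologicalSpace

variable {X : Type*} [MetricSpace X] [MeasurableSpace X] [BorelSpace X]
variable {μ : MeasureTheory.Measure X}

namespace NonHomSpace

lemma measure_ball_lt_top (H : NonHomSpace X μ) (x : X) (r : ℝ) : μ (ball x r) < ⊤ := by
  rcases le_or_gt r 0 with h | h
  · simp [ball_eq_empty.2 h]
  · exact lt_of_le_of_lt (H.measure_ball_le x r h) ofReal_lt_top

lemma measure_closedBall_lt_top (H : NonHomSpace X μ) (x : X) (r : ℝ) :
    μ (closedBall x r) < ⊤ :=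
  lt_of_le_of_lt (measure_mono (closedBall_subset_ball (lt_add_one r))) (H.measure_ball_lt_top x (r+1))

lemma locallyFinite (H : NonHomSpace X μ) : IsLocallyFiniteMeasure μ :=
  ⟨fun x => ⟨ball x 1, ball_mem_nhds x one_pos, H.measure_ball_lt_top x 1⟩⟩

lemma cover_pow (H : NonHomSpace X μ) (x : X) (r : ℝ) (hr : 0 < r) (K : ℕ) :
    ∃ s : Finset X, s.card ≤ H.N₀ ^ K ∧ ball x r ⊆ ⋃ y ∈ s, ball y (r / 2 ^ K) := by
  classical
  induction K with
  | zero => exact ⟨{x}, by simp, by simp⟩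
  | succ K ih =>
    obtain ⟨s, hcard, hcov⟩ := ih
    have hstep : ∀ y : X, ∃ t : Finset X, t.card ≤ H.N₀ ∧
        ball y (r / 2 ^ K) ⊆ ⋃ z ∈ t, ball z (r / 2 ^ (K + 1)) := by
      intro y
      obtain ⟨t, h1, h2⟩ := H.geom y (r / 2 ^ K) (by positivity)
      refine ⟨t, h1, ?_⟩
      have heq : r / 2 ^ K / 2 = r / 2 ^ (K + 1) := by ring
      rwa [heq] at h2
    choose T hT1 hT2 using hstep
    refine ⟨s.biUnion T, ?_, ?_⟩
    · calc (s.biUnion T).card ≤ ∑ y ∈ s, (T y).card := Finset.card_biUnion_le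
        _ ≤ ∑ _y ∈ s, H.N₀ := Finset.sum_le_sum fun y _ => hT1 y
        _ = s.card * H.N₀ := by rw [Finset.sum_const, smul_eq_mul]
        _ ≤ H.N₀ ^ K * H.N₀ := Nat.mul_le_mul_right _ hcard
        _ = H.N₀ ^ (K + 1) := by ring
    · intro z hz
      obtain ⟨y, hy, hz'⟩ := Set.mem_iUnion₂.1 (hcov hz)
      obtain ⟨w, hw, hz''⟩ := Set.mem_iUnion₂.1 (hT2 y hz')
      exact Set.mem_iUnion₂.2 ⟨w, Finset.mem_biUnion.2 ⟨y, hy, hw⟩, hz''⟩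

lemma separableSpace (H : NonHomSpace X μ) : SeparableSpace X := by
  rcases isEmpty_or_nonempty X with hX | hX
  · exact ⟨⟨∅, Set.countable_empty, by
      rw [dense_iff_closure_eq]
      have : (Set.univ : Set X) = ∅ := Set.univ_eq_empty_iff.2 hX
      simp [this]⟩⟩
  · obtain ⟨x₀⟩ := hX
    choose T hT1 hT2 using fun (n : ℕ) (K : ℕ) =>
      H.cover_pow x₀ ((n : ℝ) + 1) (by positivity) K
    refine ⟨⟨⋃ (n : ℕ), ⋃ (K : ℕ), (T n K : Set X), ?_, ?_⟩⟩
    · exact Set.countable_iUnion fun n => Set.countable_iUnion fun K => (T n K).countable_toSet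
    · rw [dense_iff_closure_eq, Set.eq_univ_iff_forall]
      intro x
      rw [Metric.mem_closure_iff]
      intro ε hε
      obtain ⟨n, hn⟩ := exists_nat_gt (dist x x₀)
      have hxball : x ∈ ball x₀ ((n : ℝ) + 1) :=
        mem_ball.2 (by rw [dist_comm] at hn ⊢; linarith)
      obtain ⟨K, hK⟩ := pow_unbounded_of_one_lt (((n : ℝ) + 1) / ε) (one_lt_two (α := ℝ))
      have hrad : ((n : ℝ) + 1) / 2 ^ K < ε := by
        rw [div_lt_iff₀ (by positivity)] at hK ⊢
        · calc ((n:ℝ)+1) < ε * 2 ^ K := by linarith [hK]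
            _ = ε * 2 ^ K := rfl
      obtain ⟨y, hy, hxy⟩ := Set.mem_iUnion₂.1 (hT2 n K hxball)
      exact ⟨y, Set.mem_iUnion.2 ⟨n, Set.mem_iUnion.2 ⟨K, hy⟩⟩, lt_trans (mem_ball.1 hxy) hrad⟩

/-- cardinality bound for separated sets in a ball -/
lemma separated_finite (H : NonHomSpace X μ) (x₀ : X) (R ρ : ℝ) (hR : 0 < R) (hρ : 0 < ρ)
    (K : ℕ) (hK : R / 2 ^ K ≤ ρ / 2) (T : Set X) (hTball : T ⊆ ball x₀ R)
    (hsep : T.Pairwise fun a b => ρ ≤ dist a b) :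
    T.Finite ∧ Nat.card T ≤ H.N₀ ^ K := by
  obtain ⟨s, hcard, hcov⟩ := H.cover_pow x₀ R hR K
  have hchoice : ∀ t : T, ∃ y : X, y ∈ s ∧ (t : X) ∈ ball y (R / 2 ^ K) := by
    intro t
    obtain ⟨y, hy, h⟩ := Set.mem_iUnion₂.1 (hcov (hTball t.2))
    exact ⟨y, hy, h⟩
  choose φ hφs hφd using hchoice
  have hinj : Function.Injective fun t : T => (⟨φ t, hφs t⟩ : {y // y ∈ s}) := by
    intro a b hab
    simp only [Subtype.mk_eq_mk] at hab
    by_contra hne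
    have hne' : (a : X) ≠ (b : X) := fun h => hne (Subtype.ext h)
    have h1 := hφd a
    have h2 := hφd b
    rw [hab] at h1
    have : dist (a : X) (b : X) < ρ := by
      calc dist (a : X) (b : X) ≤ dist (a : X) (φ b) + dist (φ b) (b : X) :=
            dist_triangle _ _ _
        _ < R / 2 ^ K + R / 2 ^ K := by
            rw [dist_comm (φ b) (b : X)]
            exact add_lt_add (mem_ball.1 h1) (mem_ball.1 h2)
        _ ≤ ρ / 2 + ρ / 2 := add_le_add hK hK
        _ = ρ := by ring
    exact absurd this (not_lt.2 (hsep a.2 b.2 hne'))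
  have hfin : Finite T := Finite.of_injective _ hinj
  refine ⟨Set.toFinite T, ?_⟩
  calc Nat.card T ≤ Nat.card {y // y ∈ s} := Nat.card_le_card_of_injective _ hinj
    _ = s.card := Nat.card_eq_finsetCard s
    _ ≤ H.N₀ ^ K := hcard

end NonHomSpace

/-- maximal separated subset -/
lemma exists_maximal_separated (A : Set X) (ρ : ℝ) (hρ : 0 < ρ) :
    ∃ T ⊆ A, (T.Pairwise fun a b => ρ ≤ dist a b) ∧ ∀ x ∈ A, ∃ y ∈ T, dist x y < ρ := by
  set S : Set (Set X) := {T | T ⊆ A ∧ T.Pairwise fun a b => ρ ≤ dist a b} with hS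
  have hZ : ∀ c ⊆ S, IsChain (· ⊆ ·) c → c.Nonempty → ∃ ub ∈ S, ∀ s ∈ c, s ⊆ ub := by
    intro c hc hchain _
    refine ⟨⋃₀ c, ⟨?_, ?_⟩, fun s hs => Set.subset_sUnion_of_mem hs⟩
    · exact Set.sUnion_subset fun s hs => (hc hs).1
    · intro a ha b hb hab
      obtain ⟨sa, hsa, has⟩ := ha
      obtain ⟨sb, hsb, hbs⟩ := hb
      rcases hchain.total hsa hsb with h | h
      · exact (hc hsb).2 (h has) hbs hab
      · exact (hc hsa).2 has (h hbs) hab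
  obtain ⟨T, -, hTmax⟩ := zorn_subset_nonempty S hZ ∅ ⟨Set.empty_subset A, Set.pairwise_empty _⟩
  have hTS : T ∈ S := hTmax.1
  refine ⟨T, hTS.1, hTS.2, ?_⟩
  intro x hx
  by_contra hcon
  push_neg at hcon
  have hxT : x ∉ T := fun hxT => by
    have := hcon x hxT
    simp at this
    linarith
  have : insert x T ∈ S := by
    constructor
    · exact Set.insert_subset hx hTS.1
    · intro a ha b hb hab
      rcases ha with rfl | ha
      · rcases hb with rfl | hb
        · exact absurd rfl hab
        · exact hcon b hb
      · rcases hb with rfl | hb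
        · rw [dist_comm]; exact hcon a ha
        · exact hTS.2 ha hb hab
  exact hxT (hTmax.2 this (Set.subset_insert x T) (Set.mem_insert x T))

/-- a.e. point has positive measure balls -/
lemma ae_ball_pos (μ : Measure X) [SecondCountableTopology X] :
    ∀ᵐ x ∂μ, ∀ ρ > 0, 0 < μ (ball x ρ) := by
  set ι := {p : X × ℝ | 0 < p.2 ∧ μ (ball p.1 p.2) = 0} with hι
  obtain ⟨T, hTc, hTU⟩ := TopologicalSpace.isOpen_iUnion_countable
    (fun i : ι => ball (i : X × ℝ).1 (i : X × ℝ).2) (fun i => isOpen_ball)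
  have hW : μ (⋃ i : ι, ball (i : X × ℝ).1 (i : X × ℝ).2) = 0 := by
    rw [← hTU]
    refine (measure_biUnion_null_iff hTc).2 ?_
    intro i _
    exact i.2.2
  filter_upwards [measure_eq_zero_iff_ae_notMem.1 hW] with x hx ρ hρ
  rcases eq_or_lt_of_le (show (0:ℝ≥0∞) ≤ μ (ball x ρ) from zero_le) with h | h
  · refine absurd (Set.mem_iUnion.2 ⟨⟨(x, ρ), ⟨hρ, h.symm⟩⟩, ?_⟩) hx
    exact mem_ball_self hρ
  · exact h

namespace NonHomSpace

lemma N₀_pos (H : NonHomSpace X μ) [Nonempty X] : 1 ≤ H.N₀ := by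
  obtain ⟨x₀⟩ := ‹Nonempty X›
  by_contra h
  push_neg at h
  obtain ⟨s, hs1, hs2⟩ := H.geom x₀ 1 one_pos
  have : x₀ ∈ ⋃ y ∈ s, ball y (1 / 2) := hs2 (mem_ball_self one_pos)
  obtain ⟨y, hy, -⟩ := Set.mem_iUnion₂.1 this
  rw [Finset.card_eq_zero.1 (Nat.le_zero.1 (by omega : s.card ≤ 0))] at hy
  exact absurd hy (Finset.notMem_empty y)

/-- Hytönen-type lemma: a.e. point has arbitrarily small `(72,γ)`-doubling closed balls. -/
lemma ae_small_doubling (H : NonHomSpace X μ) [Nonempty X] (γ : ℝ)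
    (hγ : ((H.N₀ : ℝ)) ^ (7 : ℕ) < γ) :
    ∀ᵐ x ∂μ, ∀ δ > 0, ∃ ρ > 0, ρ ≤ δ ∧
      μ (closedBall x (72 * ρ)) ≤ ENNReal.ofReal γ * μ (closedBall x ρ) := by
  obtain ⟨x₀⟩ := ‹Nonempty X›
  have hN₀R : (1 : ℝ) ≤ (H.N₀ : ℝ) := by exact_mod_cast H.N₀_pos
  have hγ1 : 1 < γ := lt_of_le_of_lt (one_le_pow₀ hN₀R) hγ
  have hγ0 : 0 < γ := lt_trans one_pos hγ1
  set Bad : ℝ → Set X := fun q => {x | ∀ ρ, 0 < ρ → ρ ≤ q →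
      ¬ (μ (closedBall x (72 * ρ)) ≤ ENNReal.ofReal γ * μ (closedBall x ρ))} with hBad
  have hmain : ∀ q : ℝ, 0 < q → ∀ n : ℕ, μ (Bad q ∩ ball x₀ ((n : ℝ) + 1)) = 0 := by
    intro q hq n
    set R : ℝ := (n : ℝ) + 1 with hRdef
    have hR0 : 0 < R := by positivity
    have hiter : ∀ x ∈ Bad q, ∀ N : ℕ,
        (ENNReal.ofReal γ) ^ N * μ (closedBall x (q / 72 ^ N)) ≤ μ (closedBall x q) := by
      intro x hx N
      induction N with
      | zero => simp
      | succ N ih =>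
        have hρpos : 0 < q / 72 ^ (N + 1) := by positivity
        have hρle : q / 72 ^ (N + 1) ≤ q :=
          div_le_self hq.le (one_le_pow₀ (by norm_num))
        have hstep' : ENNReal.ofReal γ * μ (closedBall x (q / 72 ^ (N + 1)))
            ≤ μ (closedBall x (72 * (q / 72 ^ (N + 1)))) := le_of_lt (not_le.1 (hx _ hρpos hρle))
        have h72 : 72 * (q / 72 ^ (N + 1)) = q / 72 ^ N := by
          field_simp
          ring
        rw [h72] at hstep'
        calc (ENNReal.ofReal γ) ^ (N + 1) * μ (closedBall x (q / 72 ^ (N + 1)))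
            = (ENNReal.ofReal γ) ^ N * (ENNReal.ofReal γ * μ (closedBall x (q / 72 ^ (N + 1)))) := by
              ring
          _ ≤ (ENNReal.ofReal γ) ^ N * μ (closedBall x (q / 72 ^ N)) := by gcongr
          _ ≤ μ (closedBall x q) := ih
    obtain ⟨K₀, hK₀⟩ := pow_unbounded_of_one_lt (2 * R / q) (one_lt_two (α := ℝ))
    set V := μ (ball x₀ (R + q + 1)) with hV
    have hVfin : V ≠ ⊤ := (H.measure_ball_lt_top x₀ _).ne
    have hNbd : ∀ N : ℕ, μ (Bad q ∩ ball x₀ R) ≤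
        (H.N₀ : ℝ≥0∞) ^ (K₀ + 7 * N) * ((ENNReal.ofReal γ⁻¹) ^ N * V) := by
      intro N
      set ρ : ℝ := q / 72 ^ N with hρdef
      have hρ0 : 0 < ρ := by positivity
      obtain ⟨T, hTsub, hTsep, hTcov⟩ := exists_maximal_separated (Bad q ∩ ball x₀ R) ρ hρ0
      have hTball : T ⊆ ball x₀ R := fun y hy => (hTsub hy).2
      have hKbound : R / 2 ^ (K₀ + 7 * N) ≤ ρ / 2 := by
        have h1 : (2 : ℝ) * R < q * 2 ^ K₀ := by
          rw [div_lt_iff₀ hq] at hK₀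
          linarith
        have h2 : (72 : ℝ) ^ N ≤ 2 ^ (7 * N) := by
          rw [pow_mul]
          exact pow_le_pow_left₀ (by norm_num) (by norm_num) N
        have h4 : (1 : ℝ) ≤ 2 ^ (7 * N) / 72 ^ N := (one_le_div (by positivity)).2 h2
        rw [div_le_div_iff₀ (by positivity) (by norm_num)]
        have h3 : ρ * 2 ^ (K₀ + 7 * N) = q * 2 ^ K₀ * (2 ^ (7 * N) / 72 ^ N) := by
          rw [hρdef, pow_add]
          field_simp
        rw [h3]
        refine le_of_lt ?_
        calc R * 2 < q * 2 ^ K₀ := by linarith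
          _ = q * 2 ^ K₀ * 1 := by ring
          _ ≤ q * 2 ^ K₀ * (2 ^ (7 * N) / 72 ^ N) := by
              have : (0:ℝ) ≤ q * 2 ^ K₀ := by positivity
              nlinarith
      obtain ⟨hTfin, hTcard⟩ :=
        H.separated_finite x₀ R ρ hR0 hρ0 (K₀ + 7 * N) hKbound T hTball hTsep
      have hcover : Bad q ∩ ball x₀ R ⊆ ⋃ y ∈ hTfin.toFinset, closedBall y ρ := by
        intro x hx
        obtain ⟨y, hy, hxy⟩ := hTcov x hx
        exact Set.mem_iUnion₂.2 ⟨y, hTfin.mem_toFinset.2 hy, mem_closedBall.2 hxy.le⟩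
      have hect : ∀ y ∈ hTfin.toFinset, μ (closedBall y ρ) ≤ (ENNReal.ofReal γ⁻¹) ^ N * V := by
        intro y hy
        have hyT : y ∈ T := hTfin.mem_toFinset.1 hy
        have hyBad : y ∈ Bad q := (hTsub hyT).1
        have h1 := hiter y hyBad N
        have hsub : closedBall y q ⊆ ball x₀ (R + q + 1) := by
          intro z hz
          have ht1 : dist z x₀ ≤ dist z y + dist y x₀ := dist_triangle _ _ _
          have h2 : dist y x₀ < R := mem_ball.1 (hTball hyT)
          have h3 : dist z y ≤ q := mem_closedBall.1 hz
          exact mem_ball.2 (by linarith)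
        have h4 : μ (closedBall y q) ≤ V := measure_mono hsub
        have hγpow : ((ENNReal.ofReal γ) ^ N) ≠ 0 := by
          apply pow_ne_zero
          simp only [ne_eq, ENNReal.ofReal_eq_zero, not_le]
          exact hγ0
        have hγpowt : ((ENNReal.ofReal γ) ^ N) ≠ ⊤ := by
          exact (pow_lt_top ofReal_lt_top).ne
        calc μ (closedBall y ρ)
            = ((ENNReal.ofReal γ) ^ N)⁻¹ * ((ENNReal.ofReal γ) ^ N * μ (closedBall y ρ)) := by
              rw [← mul_assoc, ENNReal.inv_mul_cancel hγpow hγpowt, one_mul]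
          _ ≤ ((ENNReal.ofReal γ) ^ N)⁻¹ * μ (closedBall y q) := by gcongr
          _ ≤ ((ENNReal.ofReal γ) ^ N)⁻¹ * V := by gcongr
          _ = (ENNReal.ofReal γ⁻¹) ^ N * V := by
              rw [ENNReal.ofReal_inv_of_pos hγ0, ENNReal.inv_pow]
      calc μ (Bad q ∩ ball x₀ R) ≤ ∑ y ∈ hTfin.toFinset, μ (closedBall y ρ) :=
            le_trans (measure_mono hcover) (measure_biUnion_finset_le _ _)
        _ ≤ hTfin.toFinset.card • ((ENNReal.ofReal γ⁻¹) ^ N * V) :=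
            Finset.sum_le_card_nsmul _ _ _ hect
        _ = (hTfin.toFinset.card : ℝ≥0∞) * ((ENNReal.ofReal γ⁻¹) ^ N * V) := by
            rw [nsmul_eq_mul]
        _ ≤ (H.N₀ : ℝ≥0∞) ^ (K₀ + 7 * N) * ((ENNReal.ofReal γ⁻¹) ^ N * V) := by
            gcongr
            have hcards : hTfin.toFinset.card = Nat.card T := by
              rw [Nat.card_coe_set_eq, Set.ncard_eq_toFinset_card T hTfin]
            rw [hcards]
            exact_mod_cast hTcard
        _ = _ := rfl
    -- pass to the limit
    set θ : ℝ≥0∞ := (H.N₀ : ℝ≥0∞) ^ (7 : ℕ) * ENNReal.ofReal γ⁻¹ with hθdef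
    have hθlt : θ < 1 := by
      have hcast : (H.N₀ : ℝ≥0∞) ^ (7 : ℕ) = ENNReal.ofReal ((H.N₀ : ℝ) ^ (7 : ℕ)) := by
        rw [ENNReal.ofReal_pow (by positivity)]
        congr 1
        simp [ENNReal.ofReal_natCast]
      rw [hθdef, hcast, ← ENNReal.ofReal_mul (by positivity)]
      refine ENNReal.ofReal_lt_one.2 ?_
      rw [← div_eq_mul_inv, div_lt_one hγ0]
      exact hγ
    have hbd2 : ∀ N : ℕ, μ (Bad q ∩ ball x₀ R) ≤ ((H.N₀ : ℝ≥0∞) ^ K₀ * V) * θ ^ N := by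
      intro N
      refine le_trans (hNbd N) (le_of_eq ?_)
      rw [hθdef, mul_pow, pow_add, pow_mul]
      ring
    have hAfin : ((H.N₀ : ℝ≥0∞) ^ K₀ * V) ≠ ⊤ :=
      ENNReal.mul_ne_top (pow_lt_top (natCast_lt_top _)).ne hVfin
    have htend : Tendsto (fun N : ℕ => ((H.N₀ : ℝ≥0∞) ^ K₀ * V) * θ ^ N) atTop (nhds 0) := by
      have h0 := ENNReal.tendsto_pow_atTop_nhds_zero_of_lt_one hθlt
      have := ENNReal.Tendsto.const_mul h0 (Or.inr hAfin)
      simpa using this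
    have : μ (Bad q ∩ ball x₀ R) ≤ 0 := ge_of_tendsto' htend hbd2
    exact le_antisymm this zero_le
  -- collect
  rw [ae_iff]
  have hsubset : {x | ¬ ∀ δ > 0, ∃ ρ > 0, ρ ≤ δ ∧
      μ (closedBall x (72 * ρ)) ≤ ENNReal.ofReal γ * μ (closedBall x ρ)} ⊆
      ⋃ (m : ℕ), ⋃ (n : ℕ), Bad (1 / ((m : ℝ) + 1)) ∩ ball x₀ ((n : ℝ) + 1) := by
    intro x hx
    simp only [Set.mem_setOf_eq] at hx
    push_neg at hx
    obtain ⟨δ, hδ0, hδ⟩ := hx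
    obtain ⟨m, hm⟩ := exists_nat_gt (1 / δ)
    obtain ⟨n, hn⟩ := exists_nat_gt (dist x x₀)
    refine Set.mem_iUnion.2 ⟨m, Set.mem_iUnion.2 ⟨n, ⟨?_, ?_⟩⟩⟩
    · intro ρ hρ0 hρle
      have hmδ : 1 / ((m : ℝ) + 1) ≤ δ := by
        rw [div_le_iff₀ (by positivity)]
        rw [div_lt_iff₀ hδ0] at hm
        nlinarith
      exact not_le.2 (hδ ρ hρ0 (le_trans hρle hmδ))
    · exact mem_ball.2 (by linarith)
  refine measure_mono_null hsubset ?_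
  refine measure_iUnion_null fun m => measure_iUnion_null fun n => hmain _ (by positivity) n

end NonHomSpace
open Vitali in
/-- Vitali family from a.e. doubling (adaptation of `Vitali.vitaliFamily`). -/
def vitaliNH {Y : Type*} [MetricSpace Y] [MeasurableSpace Y] [BorelSpace Y]
    [SecondCountableTopology Y]
    (μ : Measure Y) [IsLocallyFiniteMeasure μ] (C : NNReal) (G : Set Y) (hG : μ Gᶜ = 0)
    (h : ∀ x ∈ G, ∃ᶠ r in nhdsWithin (0:ℝ) (Set.Ioi (0:ℝ)),
      μ (closedBall x (3 * r)) ≤ C * μ (closedBall x r)) : VitaliFamily μ where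
  setsAt x := { a | IsClosed a ∧ (interior a).Nonempty ∧
      ∃ r, a ⊆ closedBall x r ∧ μ (closedBall x (3 * r)) ≤ C * μ a } ∪
    { a | ∃ ε, 0 < ε ∧ a = closedBall x ε ∧ x ∉ G }
  measurableSet x a ha := by
    rcases ha with ha | ⟨ε, hε, rfl, -⟩
    · exact ha.1.measurableSet
    · exact measurableSet_closedBall
  nonempty_interior x a ha := by
    rcases ha with ha | ⟨ε, hε, rfl, -⟩
    · exact ha.2.1
    · exact (nonempty_ball.2 hε).mono ball_subset_interior_closedBall
  nontrivial x ε εpos := by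
    by_cases hx : x ∈ G
    · obtain ⟨r, μr, rpos, rε⟩ :
          ∃ r, μ (closedBall x (3 * r)) ≤ C * μ (closedBall x r) ∧ r ∈ Set.Ioc (0 : ℝ) ε :=
        ((h x hx).and_eventually (Ioc_mem_nhdsGT_of_mem ⟨le_rfl, εpos⟩)).exists
      exact ⟨closedBall x r, Or.inl ⟨isClosed_closedBall,
        (nonempty_ball.2 rpos).mono ball_subset_interior_closedBall, ⟨r, Set.Subset.rfl, μr⟩⟩,
        closedBall_subset_closedBall rε⟩
    · exact ⟨closedBall x ε, Or.inr ⟨ε, εpos, rfl, hx⟩, Set.Subset.rfl⟩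
  covering := by
    intro s f fsubset ffine
    let t : Set (ℝ × Y × Set Y) :=
      { p | p.2.2 ⊆ closedBall p.2.1 p.1 ∧ μ (closedBall p.2.1 (3 * p.1)) ≤ C * μ p.2.2 ∧
            (interior p.2.2).Nonempty ∧ IsClosed p.2.2 ∧ p.2.2 ∈ f p.2.1 ∧ p.2.1 ∈ s ∩ G }
    have A : ∀ x ∈ s ∩ G, ∀ ε : ℝ, ε > 0 → ∃ p, p ∈ t ∧ p.1 ≤ ε ∧ p.2.1 = x := by
      intro x xs ε εpos
      rcases ffine x xs.1 ε εpos with ⟨a, ha, h'a⟩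
      rcases fsubset x xs.1 ha with ⟨a_closed, a_int, ⟨r, ar, μr⟩⟩ | ⟨ε', hε', rfl, hxG⟩
      · refine ⟨⟨min r ε, x, a⟩, ⟨?_, ?_, a_int, a_closed, ha, xs⟩, min_le_right _ _, rfl⟩
        · rcases min_cases r ε with (h' | h') <;> rw [h'.1]
          · exact ar
          · exact h'a
        · refine le_trans ?_ μr
          gcongr
          apply min_le_left
      · exact absurd xs.2 hxG
    rcases exists_disjoint_covering_ae μ (s ∩ G) t C (fun p => p.1) (fun p => p.2.1)
        (fun p => p.2.2) (fun p hp => hp.1) (fun p hp => hp.2.1) (fun p hp => hp.2.2.1)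
        (fun p hp => hp.2.2.2.1) A
      with ⟨t', t't, _, t'_disj, μt'⟩
    refine ⟨(fun p : ℝ × Y × Set Y => p.2) '' t', ?_, ?_, ?_, ?_⟩
    · rintro - ⟨q, hq, rfl⟩
      exact (t't hq).2.2.2.2.2.1
    · rintro p ⟨q, hq, rfl⟩ p' ⟨q', hq', rfl⟩ hqq'
      exact t'_disj hq hq' (ne_of_apply_ne _ hqq')
    · rintro - ⟨q, hq, rfl⟩
      exact (t't hq).2.2.2.2.1
    · have hsplit : s \ ⋃ (p : Y × Set Y) (_ : p ∈ (fun p : ℝ × Y × Set Y => p.2) '' t'), p.2 ⊆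
          ((s ∩ G) \ ⋃ (a : ℝ × Y × Set Y) (_ : a ∈ t'), a.2.2) ∪ Gᶜ := by
        intro x hx
        by_cases hxG : x ∈ G
        · left
          refine ⟨⟨hx.1, hxG⟩, fun hmem => hx.2 ?_⟩
          obtain ⟨a, ha, hxa⟩ := Set.mem_iUnion₂.1 hmem
          exact Set.mem_iUnion₂.2 ⟨a.2, Set.mem_image_of_mem _ ha, hxa⟩
        · exact Or.inr hxG
      refine measure_mono_null hsplit ?_
      exact measure_union_null μt' hG
namespace NonHomSpace

/-- differentiation: a.e. point with large `g` admits a "good" ball. -/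
lemma ae_good_ball (H : NonHomSpace X μ) [Nonempty X] [SecondCountableTopology X]
    [IsLocallyFiniteMeasure μ]
    (γ : ℝ) (hγN : ((H.N₀ : ℝ)) ^ (7 : ℕ) < γ)
    (g : X → ℝ) (hg : Integrable g μ) (hg0 : ∀ x, 0 ≤ g x) :
    ∀ᵐ x ∂μ, ∀ b : ℝ, 0 ≤ b → b < g x → ∃ r > 0,
      ENNReal.ofReal (b / γ) * μ (ball x (36 * r)) <
        ∫⁻ y in ball x r, ENNReal.ofReal (g y) ∂μ := by
  have hN₀R : (1 : ℝ) ≤ (H.N₀ : ℝ) := by exact_mod_cast H.N₀_pos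
  have hγ1 : 1 < γ := lt_of_le_of_lt (one_le_pow₀ hN₀R) hγN
  have hγ0 : 0 < γ := lt_trans one_pos hγ1
  set G := {x | ∀ δ > 0, ∃ ρ > 0, ρ ≤ δ ∧
      μ (closedBall x (72 * ρ)) ≤ ENNReal.ofReal γ * μ (closedBall x ρ)} with hGdef
  have hGmem : ∀ᵐ x ∂μ, x ∈ G := by
    rw [hGdef]
    exact H.ae_small_doubling γ hγN
  have hGae : μ Gᶜ = 0 := ae_iff.1 hGmem
  have hfreq : ∀ x ∈ G, ∃ᶠ r in nhdsWithin (0 : ℝ) (Set.Ioi (0 : ℝ)),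
      μ (closedBall x (3 * r)) ≤ (γ.toNNReal : ℝ≥0∞) * μ (closedBall x r) := by
    intro x hx
    rw [Filter.frequently_iff]
    intro U hU
    obtain ⟨δ, hδ0, hδU⟩ := mem_nhdsGT_iff_exists_Ioc_subset.1 hU
    obtain ⟨ρ, hρ0, hρδ, hdbl⟩ := hx δ hδ0
    refine ⟨ρ, hδU ⟨hρ0, hρδ⟩, ?_⟩
    calc μ (closedBall x (3 * ρ)) ≤ μ (closedBall x (72 * ρ)) :=
          measure_mono (closedBall_subset_closedBall (by linarith))
      _ ≤ ENNReal.ofReal γ * μ (closedBall x ρ) := hdbl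
      _ = (γ.toNNReal : ℝ≥0∞) * μ (closedBall x ρ) := rfl
  set v := vitaliNH μ γ.toNNReal G hGae hfreq with hv
  filter_upwards [v.ae_tendsto_average hg.locallyIntegrable, ae_ball_pos μ, hGmem]
    with x havg hpos hxG
  intro b hb0 hbg
  have hev : ∀ᶠ a in v.filterAt x, b < ⨍ y in a, g y ∂μ :=
    havg.eventually (eventually_gt_nhds hbg)
  rw [VitaliFamily.eventually_filterAt_iff] at hev
  obtain ⟨ε, hε0, hev⟩ := hev
  obtain ⟨ρ, hρ0, hρε, hdbl⟩ := hxG ε hε0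
  have hmem : closedBall x ρ ∈ v.setsAt x := by
    refine Or.inl ⟨isClosed_closedBall,
      (nonempty_ball.2 hρ0).mono ball_subset_interior_closedBall, ρ, Set.Subset.rfl, ?_⟩
    calc μ (closedBall x (3 * ρ)) ≤ μ (closedBall x (72 * ρ)) :=
          measure_mono (closedBall_subset_closedBall (by linarith))
      _ ≤ ENNReal.ofReal γ * μ (closedBall x ρ) := hdbl
      _ = (γ.toNNReal : ℝ≥0∞) * μ (closedBall x ρ) := rfl
  have havgρ : b < ⨍ y in closedBall x ρ, g y ∂μ :=
    hev _ hmem (closedBall_subset_closedBall hρε)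
  have hμρpos : 0 < μ (closedBall x ρ) :=
    lt_of_lt_of_le (hpos ρ hρ0) (measure_mono ball_subset_closedBall)
  have hμρfin : μ (closedBall x ρ) < ⊤ := H.measure_closedBall_lt_top x ρ
  have hint : b * (μ (closedBall x ρ)).toReal < ∫ y in closedBall x ρ, g y ∂μ := by
    have h2 := havgρ
    rw [setAverage_eq, smul_eq_mul, ← div_eq_inv_mul, lt_div_iff₀ (by
      exact ENNReal.toReal_pos hμρpos.ne' hμρfin.ne)] at h2
    rw [measureReal_def] at h2
    linarith
  have hintpos : 0 < ∫ y in closedBall x ρ, g y ∂μ :=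
    lt_of_le_of_lt (by positivity) hint
  have h1 : ENNReal.ofReal b * μ (closedBall x ρ) <
      ∫⁻ y in closedBall x ρ, ENNReal.ofReal (g y) ∂μ := by
    rw [← ofReal_integral_eq_lintegral_ofReal hg.integrableOn
      (Filter.Eventually.of_forall hg0)]
    calc ENNReal.ofReal b * μ (closedBall x ρ)
        = ENNReal.ofReal b * ENNReal.ofReal (μ (closedBall x ρ)).toReal := by
          rw [ofReal_toReal hμρfin.ne]
      _ = ENNReal.ofReal (b * (μ (closedBall x ρ)).toReal) :=
          (ENNReal.ofReal_mul hb0).symm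
      _ < ENNReal.ofReal (∫ y in closedBall x ρ, g y ∂μ) :=
          (ENNReal.ofReal_lt_ofReal_iff hintpos).2 hint
  refine ⟨2 * ρ, by positivity, ?_⟩
  have h36 : (36 : ℝ) * (2 * ρ) = 72 * ρ := by ring
  calc ENNReal.ofReal (b / γ) * μ (ball x (36 * (2 * ρ)))
      ≤ ENNReal.ofReal (b / γ) * (ENNReal.ofReal γ * μ (closedBall x ρ)) := by
        gcongr
        rw [h36]
        exact le_trans (measure_mono ball_subset_closedBall) hdbl
    _ = (ENNReal.ofReal (b / γ) * ENNReal.ofReal γ) * μ (closedBall x ρ) := by ring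
    _ = ENNReal.ofReal b * μ (closedBall x ρ) := by
        rw [← ENNReal.ofReal_mul (by positivity), div_mul_cancel₀ _ hγ0.ne']
    _ < ∫⁻ y in closedBall x ρ, ENNReal.ofReal (g y) ∂μ := h1
    _ ≤ ∫⁻ y in ball x (2 * ρ), ENNReal.ofReal (g y) ∂μ := by
        refine lintegral_mono' (Measure.restrict_mono ?_ le_rfl) le_rfl
        intro z hz
        exact mem_ball.2 (lt_of_le_of_lt (mem_closedBall.1 hz) (by linarith))

end NonHomSpace
/-- Vitali-type selection for balls with linearly growing radii. -/
lemma covering_sel [TopologicalSpace.SeparableSpace X] (x₀ : X) (a : ℝ) (ha : 0 < a)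
    (S : Set X) (rr : X → ℝ) (hr0 : ∀ x ∈ S, 0 < rr x)
    (hgrow : ∀ x ∈ S, 36 * rr x ≤ 36 * a + dist x x₀) :
    ∃ D ⊆ S, D.Countable ∧
      (D.Pairwise fun y z => Disjoint (ball y (rr y)) (ball z (rr z))) ∧
      ∀ x ∈ S, ∃ y ∈ D, x ∈ ball y (6 * rr y) := by
  classical
  haveI : Nonempty X := ⟨x₀⟩
  set σ := {x // x ∈ S} with hσ
  set k : σ → ℤ := fun y => Int.log 5 (rr y.1) with hk
  set M : σ → ℝ := fun y => max (dist y.1 x₀) (36 * a) with hM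
  set n : σ → ℤ := fun y => Int.log 4 (M y) with hn
  have hrpos : ∀ y : σ, 0 < rr y.1 := fun y => hr0 y.1 y.2
  have hM0 : ∀ y : σ, 0 < M y := fun y => lt_of_lt_of_le (by positivity) (le_max_right _ _)
  have hrM : ∀ y : σ, rr y.1 ≤ M y / 18 := by
    intro y
    have h1 := hgrow y.1 y.2
    have h2 : dist y.1 x₀ ≤ M y := le_max_left _ _
    have h3 : 36 * a ≤ M y := le_max_right _ _
    linarith
  have hk_low : ∀ y : σ, (5 : ℝ) ^ (k y) ≤ rr y.1 := by
    intro y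
    have := Int.zpow_log_le_self (b := 5) (by norm_num) (hrpos y)
    exact_mod_cast this
  have hk_up : ∀ y : σ, rr y.1 < (5 : ℝ) ^ (k y + 1) := by
    intro y
    have := Int.lt_zpow_succ_log_self (b := 5) (by norm_num) (rr y.1)
    exact_mod_cast this
  have hn_low : ∀ y : σ, (4 : ℝ) ^ (n y) ≤ M y := by
    intro y
    have := Int.zpow_log_le_self (b := 4) (by norm_num) (hM0 y)
    exact_mod_cast this
  have hn_up : ∀ y : σ, M y < (4 : ℝ) ^ (n y + 1) := by
    intro y
    have := Int.lt_zpow_succ_log_self (b := 4) (by norm_num) (M y)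
    exact_mod_cast this
  set Inter : σ → σ → Prop := fun y z => (ball y.1 (rr y.1) ∩ ball z.1 (rr z.1)).Nonempty
    with hInter
  have hIsymm : ∀ {y z}, Inter y z → Inter z y := by
    intro y z h
    rwa [hInter, Set.inter_comm] at h
  have hdist : ∀ {y z}, Inter y z → dist y.1 z.1 < rr y.1 + rr z.1 := by
    intro y z h
    obtain ⟨w, hw1, hw2⟩ := h
    calc dist y.1 z.1 ≤ dist y.1 w + dist w z.1 := dist_triangle _ _ _
      _ < rr y.1 + rr z.1 := add_lt_add (mem_ball'.1 hw1) (mem_ball.1 hw2)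
  have hM4 : ∀ {y z}, Inter y z → M z < 4 * M y := by
    intro y z h
    have hd := hdist h
    have h1 : dist z.1 x₀ ≤ dist z.1 y.1 + dist y.1 x₀ := dist_triangle _ _ _
    have h2 : dist y.1 x₀ ≤ M y := le_max_left _ _
    have hry := hrM y
    have hrz := hrM z
    rw [dist_comm z.1 y.1] at h1
    have h36y : 36 * a ≤ M y := le_max_right _ _
    refine max_lt ?_ (by linarith [hM0 y]) 
    by_cases hcase : dist z.1 x₀ ≤ 36 * a
    · linarith [hM0 y]
    · have hMz : M z = dist z.1 x₀ := max_eq_left (le_of_not_ge hcase)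
      have : dist z.1 x₀ < M y + (M y / 18 + M z / 18) := by linarith
      rw [hMz] at *
      linarith
  have hn1 : ∀ {y z}, Inter y z → n z ≤ n y + 1 := by
    intro y z h
    have h1 : (4 : ℝ) ^ (n z) < 4 ^ (n y + 2) := by
      calc (4 : ℝ) ^ (n z) ≤ M z := hn_low z
        _ < 4 * M y := hM4 h
        _ < 4 * 4 ^ (n y + 1) := by linarith [hn_up y]
        _ = 4 ^ (n y + 2) := by
            have h1 : (4:ℝ) ^ (n y + 2) = 4 ^ (n y) * 4 ^ (2:ℤ) := zpow_add₀ (by norm_num) _ _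
            have h2 : (4:ℝ) ^ (n y + 1) = 4 ^ (n y) * 4 ^ (1:ℤ) := zpow_add₀ (by norm_num) _ _
            rw [h1, h2]
            norm_num
            ring
    have := (zpow_lt_zpow_iff_right₀ (by norm_num : (1:ℝ) < 4)).1 h1
    omega
  set Prio : σ → σ → Prop := fun y z =>
    k y > k z ∨ (k y = k z ∧ (n y < n z ∨ (n y = n z ∧ WellOrderingRel y z))) with hPrio
  set Rel : σ → σ → Prop := fun y z => Inter y z ∧ Prio y z with hRel
  -- no infinite chains
  have hnochain : ∀ F : ℕ → σ, ¬ ∀ i, Rel (F (i + 1)) (F i) := by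
    intro F hF
    have hkmono : ∀ i, k (F i) ≤ k (F (i + 1)) := by
      intro i
      rcases (hF i).2 with h | ⟨h, -⟩
      · exact le_of_lt h
      · exact le_of_eq h.symm
    have hkmono' : ∀ i j, i ≤ j → k (F i) ≤ k (F j) :=
      fun i j hij => monotone_nat_of_le_succ hkmono hij
    have hinv : ∀ i, n (F i) - k (F i) ≤ n (F 0) - k (F 0) := by
      intro i
      induction i with
      | zero => exact le_refl _
      | succ i ih =>
        have hI : Inter (F i) (F (i + 1)) := hIsymm (hF i).1
        have hn' : n (F (i + 1)) ≤ n (F i) + 1 := hn1 hI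
        rcases (hF i).2 with h | ⟨heq, hrest⟩
        · have : k (F i) + 1 ≤ k (F (i + 1)) := h
          omega
        · have hnle : n (F (i + 1)) ≤ n (F i) := by
            rcases hrest with h | ⟨h, -⟩
            · exact le_of_lt h
            · exact le_of_eq h
          omega
    -- k bounded above
    have hkbd : ∀ i, (5 : ℝ) ^ (k (F i)) < 4 ^ (k (F i) + (n (F 0) - k (F 0)) + 1) := by
      intro i
      calc (5 : ℝ) ^ (k (F i)) ≤ rr (F i).1 := hk_low _
        _ ≤ M (F i) / 18 := hrM _
        _ < M (F i) := by linarith [hM0 (F i)]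
        _ < 4 ^ (n (F i) + 1) := hn_up _
        _ ≤ 4 ^ (k (F i) + (n (F 0) - k (F 0)) + 1) := by
            apply zpow_le_zpow_right₀ (by norm_num : (1:ℝ) ≤ 4)
            have := hinv i
            omega
    have hkB : ∃ B : ℤ, ∀ i, k (F i) ≤ B := by
      set c : ℤ := n (F 0) - k (F 0) + 1 with hc
      refine ⟨⌈(c : ℝ) * Real.log 4 / (Real.log 5 - Real.log 4)⌉, fun i => ?_⟩
      have h4 : (0:ℝ) < Real.log 4 := Real.log_pos (by norm_num)
      have h45 : Real.log 4 < Real.log 5 := Real.log_lt_log (by norm_num) (by norm_num)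
      have hlog := Real.log_lt_log (by positivity) (hkbd i)
      rw [Real.log_zpow, Real.log_zpow] at hlog
      have hki : (k (F i) : ℝ) < (c : ℝ) * Real.log 4 / (Real.log 5 - Real.log 4) := by
        rw [lt_div_iff₀ (by linarith)]
        have hcR : (c : ℝ) = (n (F 0) : ℝ) - (k (F 0) : ℝ) + 1 := by
          rw [hc]
          push_cast
          ring
        push_cast at hlog
        rw [hcR]
        ring_nf at hlog ⊢
        nlinarith [hlog]
      have := lt_of_lt_of_le hki (Int.le_ceil _)
      exact_mod_cast le_of_lt this
    obtain ⟨B, hB⟩ := hkB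
    -- k eventually constant
    obtain ⟨kmax, ⟨i₀, hi₀⟩, hkmax⟩ :=
      Int.exists_greatest_of_bdd (P := fun z => ∃ i, k (F i) = z)
        ⟨B, fun z hz => by obtain ⟨i, hi⟩ := hz; rw [← hi]; exact hB i⟩ ⟨k (F 0), 0, rfl⟩
    have hkconst : ∀ i, i₀ ≤ i → k (F i) = kmax := by
      intro i hi
      refine le_antisymm (hkmax _ ⟨i, rfl⟩) ?_
      rw [← hi₀]
      exact hkmono' i₀ i hi
    -- n nonincreasing after i₀, bounded below
    have hnmono : ∀ i, i₀ ≤ i → n (F (i + 1)) ≤ n (F i) := by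
      intro i hi
      rcases (hF i).2 with h | ⟨heq, hrest⟩
      · exfalso
        have h1 := hkconst i hi
        have h2 := hkconst (i + 1) (by omega)
        omega
      · rcases hrest with h | ⟨h, -⟩
        · exact le_of_lt h
        · exact le_of_eq h
    have hnshift : Antitone (fun j : ℕ => n (F (i₀ + j))) := by
      refine antitone_nat_of_succ_le fun j => ?_
      have := hnmono (i₀ + j) (by omega)
      have heq : i₀ + j + 1 = i₀ + (j + 1) := by omega
      rwa [heq] at this
    have hnmono' : ∀ i j, i₀ ≤ i → i ≤ j → n (F j) ≤ n (F i) := by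
      intro i j hi hij
      have h1 : i = i₀ + (i - i₀) := by omega
      have h2 : j = i₀ + (j - i₀) := by omega
      rw [h1, h2]
      exact hnshift (by omega)
    have hnbd : ∀ i, Int.log 4 (36 * a) ≤ n (F i) := by
      intro i
      exact Int.log_mono_right (by positivity) (le_max_right _ _)
    obtain ⟨nmin, ⟨i₁, hi₁ge, hi₁⟩, hnmin⟩ :=
      Int.exists_least_of_bdd (P := fun z => ∃ i, i₀ ≤ i ∧ n (F i) = z)
        ⟨Int.log 4 (36 * a), fun z hz => by obtain ⟨i, -, hi⟩ := hz; rw [← hi]; exact hnbd i⟩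
        ⟨n (F i₀), i₀, le_refl _, rfl⟩
    have hnconst : ∀ i, i₁ ≤ i → n (F i) = nmin := by
      intro i hi
      refine le_antisymm ?_ (hnmin _ ⟨i, le_trans hi₁ge hi, rfl⟩)
      rw [← hi₁]
      exact hnmono' i₁ i hi₁ge hi
    -- tail is a descending WellOrderingRel chain
    have hWtail : ∀ i, i₁ ≤ i → WellOrderingRel (F (i + 1)) (F i) := by
      intro i hi
      rcases (hF i).2 with h | ⟨heq, hrest⟩
      · exfalso
        have h1 := hkconst i (le_trans hi₁ge hi)
        have h2 := hkconst (i + 1) (by omega)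
        omega
      · rcases hrest with h | ⟨-, hW⟩
        · exfalso
          have h1 := hnconst i hi
          have h2 := hnconst (i + 1) (by omega)
          omega
        · exact hW
    have hwfW : WellFounded (@WellOrderingRel σ) := (IsWellFounded.wf : WellFounded _)
    obtain ⟨m, ⟨j, rfl⟩, hmmin⟩ := hwfW.has_min (Set.range fun j : ℕ => F (i₁ + j))
      ⟨F (i₁ + 0), 0, rfl⟩
    have hstep := hWtail (i₁ + j) (by omega)
    have : i₁ + j + 1 = i₁ + (j + 1) := by omega
    rw [this] at hstep
    exact hmmin (F (i₁ + (j + 1))) ⟨j + 1, rfl⟩ hstep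
  -- well-foundedness
  have hwf : WellFounded Rel := by
    constructor
    intro y0
    by_contra hy0
    have step : ∀ y : σ, ¬ Acc Rel y → ∃ z, Rel z y ∧ ¬ Acc Rel z := by
      intro y hy
      by_contra hz
      push_neg at hz
      exact hy (Acc.intro y fun z hzy => not_not.1 (fun hnz => absurd (hz z hzy) (by tauto)))
    have step' : ∀ p : {y : σ // ¬ Acc Rel y}, ∃ q : {y : σ // ¬ Acc Rel y}, Rel q.1 p.1 := by
      intro p
      obtain ⟨z, h1, h2⟩ := step p.1 p.2
      exact ⟨⟨z, h2⟩, h1⟩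
    choose nxt hnxt using step'
    let F0 : ℕ → {y : σ // ¬ Acc Rel y} := fun i => Nat.rec ⟨y0, hy0⟩ (fun _ p => nxt p) i
    exact hnochain (fun i => (F0 i).1) (fun i => hnxt (F0 i))
  -- selection
  set sel : σ → Prop := hwf.fix (fun y IH => ∀ z (h : Rel z y), ¬ IH z h) with hseldef
  have hsel_iff : ∀ y, sel y ↔ ∀ z, Rel z y → ¬ sel z := by
    intro y
    rw [hseldef]
    rw [WellFounded.fix_eq]
  have htri : ∀ y z : σ, y ≠ z → Inter y z → Rel y z ∨ Rel z y := by
    intro y z hne hI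
    rcases lt_trichotomy (k y) (k z) with h | h | h
    · exact Or.inr ⟨hIsymm hI, Or.inl h⟩
    · rcases lt_trichotomy (n y) (n z) with h2 | h2 | h2
      · exact Or.inl ⟨hI, Or.inr ⟨h, Or.inl h2⟩⟩
      · rcases trichotomous_of WellOrderingRel y z with h3 | h3 | h3
        · exact Or.inl ⟨hI, Or.inr ⟨h, Or.inr ⟨h2, h3⟩⟩⟩
        · exact absurd h3 hne
        · exact Or.inr ⟨hIsymm hI, Or.inr ⟨h.symm, Or.inr ⟨h2.symm, h3⟩⟩⟩
      · exact Or.inr ⟨hIsymm hI, Or.inr ⟨h.symm, Or.inl h2⟩⟩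
    · exact Or.inl ⟨hI, Or.inl h⟩
  set D' : Set σ := {y | sel y} with hD'
  -- disjointness at subtype level
  have hdisj : ∀ y z : σ, sel y → sel z → y ≠ z →
      Disjoint (ball y.1 (rr y.1)) (ball z.1 (rr z.1)) := by
    intro y z hy hz hne
    by_contra hnd
    have hI : Inter y z := Set.not_disjoint_iff_nonempty_inter.1 hnd
    rcases htri y z hne hI with h | h
    · exact ((hsel_iff z).1 hz y h) hy
    · exact ((hsel_iff y).1 hy z h) hz
  -- coverage at subtype level
  have hcov : ∀ x : σ, ∃ y : σ, sel y ∧ x.1 ∈ ball y.1 (6 * rr y.1) := by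
    intro x
    by_cases hx : sel x
    · exact ⟨x, hx, mem_ball_self (by linarith [hrpos x])⟩
    · rw [hsel_iff] at hx
      push_neg at hx
      obtain ⟨z, hzx, hzsel⟩ := hx
      refine ⟨z, hzsel, ?_⟩
      have hI : Inter z x := hzx.1
      have hd := hdist hI
      have hkzx : k x ≤ k z := by
        rcases hzx.2 with h | ⟨h, -⟩
        · exact le_of_lt h
        · exact le_of_eq h.symm
      have hrr : rr x.1 < 5 * rr z.1 := by
        calc rr x.1 < 5 ^ (k x + 1) := hk_up x
          _ = 5 * 5 ^ (k x) := by
              rw [zpow_add_one₀ (by norm_num : (5:ℝ) ≠ 0)]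
              ring
          _ ≤ 5 * 5 ^ (k z) := by
              have := zpow_le_zpow_right₀ (by norm_num : (1:ℝ) ≤ 5) hkzx
              linarith
          _ ≤ 5 * rr z.1 := by linarith [hk_low z]
      rw [mem_ball]
      have hd' : dist x.1 z.1 < rr z.1 + rr x.1 := by
        rw [dist_comm]
        exact hd
      linarith
  -- countability
  have hcount : D'.Countable := by
    rw [Set.countable_iff_exists_injective]
    have hchoice : ∀ y : ↥D', ∃ nn : ℕ,
        TopologicalSpace.denseSeq X nn ∈ ball (y.1.1 : X) (rr y.1.1) := by
      intro y
      obtain ⟨nn, hnn⟩ := (TopologicalSpace.denseRange_denseSeq X).exists_mem_open isOpen_ball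
        (nonempty_ball.2 (hrpos y.1))
      exact ⟨nn, hnn⟩
    choose φ hφ using hchoice
    refine ⟨φ, fun y z hyz => ?_⟩
    by_contra hne
    have hvne : y.1 ≠ z.1 := fun h => hne (Subtype.ext h)
    have := hdisj y.1 z.1 y.2 z.2 hvne
    have h1 := hφ y
    have h2 := hφ z
    rw [hyz] at h1
    exact absurd (Set.not_disjoint_iff.2 ⟨_, h1, h2⟩) (not_not.2 this)
  refine ⟨Subtype.val '' D', ?_, hcount.image _, ?_, ?_⟩
  · rintro - ⟨y, -, rfl⟩
    exact y.2
  · rintro - ⟨y, hy, rfl⟩ - ⟨z, hz, rfl⟩ hne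
    exact hdisj y z hy hz (fun h => hne (congrArg Subtype.val h))
  · intro x hx
    obtain ⟨y, hysel, hyb⟩ := hcov ⟨x, hx⟩
    exact ⟨y.1, Set.mem_image_of_mem _ hysel, hyb⟩
end NHAux

/-- Calderón–Zygmund decomposition (selection of the balls). -/
theorem statement7 (X : Type*) [MetricSpace X] [MeasurableSpace X] [BorelSpace X]
    (μ : MeasureTheory.Measure X) (H : NonHomSpace X μ) (γ₀ p t : ℝ)
    (hγ₀ : max (H.Clam ^ (3 * Real.logb 2 6)) ((6 : ℝ) ^ (3 * Real.logb 2 (H.N₀ : ℝ))) < γ₀)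
    (hp : 1 ≤ p) (f : X → ℝ)
    (hf : MeasureTheory.MemLp f (ENNReal.ofReal p) μ) (ht : 0 < t)
    (ht' : μ Set.univ < ⊤ →
      ENNReal.ofReal (γ₀ ^ (1 / p)) * MeasureTheory.eLpNorm f (ENNReal.ofReal p) μ <
        ENNReal.ofReal t * μ Set.univ ^ (1 / p)) :
    ∃ (ι : Type) (_ : Countable ι) (c : ι → X) (r : ι → ℝ),
      (∀ j, 0 < r j) ∧
      (Pairwise fun i j => Disjoint (Metric.ball (c i) (r i)) (Metric.ball (c j) (r j))) ∧
      (∀ j, ENNReal.ofReal (t ^ p / γ₀) * μ (Metric.ball (c j) (6 ^ 2 * r j)) <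
        ∫⁻ x in Metric.ball (c j) (r j), ENNReal.ofReal (|f x| ^ p) ∂μ) ∧
      (∀ j, ∀ η : ℝ, 2 < η →
        ∫⁻ x in Metric.ball (c j) (η * r j), ENNReal.ofReal (|f x| ^ p) ∂μ ≤
          ENNReal.ofReal (t ^ p / γ₀) * μ (Metric.ball (c j) (6 ^ 2 * η * r j))) ∧
      (∀ᵐ x ∂μ, x ∉ (⋃ j, Metric.ball (c j) (6 * r j)) → |f x| ≤ t) := by
  classical
  rcases isEmpty_or_nonempty X with hX | hX
  · refine ⟨Empty, inferInstance, fun j => j.elim, fun j => j.elim, fun j => j.elim,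
      fun i => i.elim, fun j => j.elim, fun j => j.elim, ?_⟩
    exact Filter.Eventually.of_forall fun x => (hX.false x).elim
  obtain ⟨x₀⟩ := hX
  haveI : Nonempty X := ⟨x₀⟩
  haveI : TopologicalSpace.SeparableSpace X := H.separableSpace
  haveI : SecondCountableTopology X := UniformSpace.secondCountable_of_separable X
  haveI : IsLocallyFiniteMeasure μ := H.locallyFinite
  have hp0 : 0 < p := lt_of_lt_of_le one_pos hp
  -- numeric facts about γ₀
  have hγ₀1 : 1 < γ₀ := by
    refine lt_of_le_of_lt ?_ (lt_of_le_of_lt (le_max_left _ _) hγ₀)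
    rw [show (1 : ℝ) = H.Clam ^ (0 : ℝ) by rw [Real.rpow_zero]]
    refine Real.rpow_le_rpow_of_exponent_le H.Clam_gt.le ?_
    have hlb := Real.logb_pos (one_lt_two) (by norm_num : (1:ℝ) < 6)
    linarith
  have hγ₀0 : 0 < γ₀ := lt_trans one_pos hγ₀1
  have hγN : ((H.N₀ : ℝ)) ^ (7 : ℕ) < γ₀ := by
    rcases le_or_gt (H.N₀ : ℝ) 1 with hN | hN
    · exact lt_of_le_of_lt (pow_le_one₀ (by positivity) hN) hγ₀1
    · have hN0 : (0 : ℝ) < (H.N₀ : ℝ) := lt_trans one_pos hN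
      have hid : (6 : ℝ) ^ (3 * Real.logb 2 (H.N₀ : ℝ)) =
          ((H.N₀ : ℝ)) ^ (3 * Real.logb 2 6) := by
        have e1 : (6 : ℝ) ^ (3 * Real.logb 2 (H.N₀ : ℝ)) =
            2 ^ (Real.logb 2 6 * (3 * Real.logb 2 (H.N₀ : ℝ))) := by
          rw [Real.rpow_mul (by norm_num : (0:ℝ) ≤ 2),
            Real.rpow_logb two_pos (by norm_num) (by norm_num)]
        have e2 : ((H.N₀ : ℝ)) ^ (3 * Real.logb 2 6) =
            2 ^ (Real.logb 2 (H.N₀ : ℝ) * (3 * Real.logb 2 6)) := by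
          rw [Real.rpow_mul (by norm_num : (0:ℝ) ≤ 2),
            Real.rpow_logb two_pos (by norm_num) hN0]
        rw [e1, e2]
        ring_nf
      have hcube : (2 : ℝ) ^ ((7 : ℝ) / 3) ≤ 6 := by
        have h1 : (2 : ℝ) ^ ((7 : ℝ) / 3) = (128 : ℝ) ^ ((1 : ℝ) / 3) := by
          rw [show (128 : ℝ) = 2 ^ ((7 : ℕ) : ℝ) by rw [Real.rpow_natCast]; norm_num,
            ← Real.rpow_mul (by norm_num)]
          norm_num
        have h2 : (6 : ℝ) = (216 : ℝ) ^ ((1 : ℝ) / 3) := by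
          rw [show (216 : ℝ) = 6 ^ ((3 : ℕ) : ℝ) by rw [Real.rpow_natCast]; norm_num,
            ← Real.rpow_mul (by norm_num)]
          norm_num
        rw [h1, h2]
        exact Real.rpow_le_rpow (by norm_num) (by norm_num) (by norm_num)
      have h73 : (7 : ℝ) ≤ 3 * Real.logb 2 6 := by
        have := (Real.le_logb_iff_rpow_le one_lt_two (by norm_num : (0 : ℝ) < 6)).2 hcube
        linarith
      calc ((H.N₀ : ℝ)) ^ (7 : ℕ) = ((H.N₀ : ℝ)) ^ ((7 : ℕ) : ℝ) :=
            (Real.rpow_natCast _ 7).symm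
        _ ≤ ((H.N₀ : ℝ)) ^ (3 * Real.logb 2 6) :=
            Real.rpow_le_rpow_of_exponent_le hN.le (by push_cast; linarith)
        _ = (6 : ℝ) ^ (3 * Real.logb 2 (H.N₀ : ℝ)) := hid.symm
        _ ≤ _ := le_max_right _ _
        _ < γ₀ := hγ₀
  -- the function g
  set g : X → ℝ := fun x => |f x| ^ p with hgdef
  have hg0 : ∀ x, 0 ≤ g x := fun x => Real.rpow_nonneg (abs_nonneg _) p
  have hpne0 : (ENNReal.ofReal p) ≠ 0 := by
    simp only [ne_eq, ENNReal.ofReal_eq_zero, not_le]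
    exact hp0
  have hgint : Integrable g μ := by
    have h1 := hf.integrable_norm_rpow hpne0 ofReal_ne_top
    have h2 : (ENNReal.ofReal p).toReal = p := ENNReal.toReal_ofReal hp0.le
    rw [h2] at h1
    simpa only [Real.norm_eq_abs] using h1
  -- I and its finiteness
  set I : ℝ≥0∞ := ∫⁻ x, ENNReal.ofReal (|f x| ^ p) ∂μ with hIdef
  have hIfin : I < ⊤ := by
    rw [hIdef, ← ofReal_integral_eq_lintegral_ofReal hgint (Filter.Eventually.of_forall hg0)]
    exact ofReal_lt_top
  have hs0 : (0 : ℝ) < t ^ p / γ₀ := by positivity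
  have hs0' : ENNReal.ofReal (t ^ p / γ₀) ≠ 0 := by
    simp only [ne_eq, ENNReal.ofReal_eq_zero, not_le]
    exact hs0
  -- I < s0 * μ univ
  have hIlt : I < ENNReal.ofReal (t ^ p / γ₀) * μ Set.univ := by
    rcases eq_top_or_lt_top (μ Set.univ) with hμt | hμt
    · rw [hμt, ENNReal.mul_top hs0']
      exact hIfin
    · have hst := ht' hμt
      -- raise both sides to power p
      have hIe : I = ∫⁻ x, (‖f x‖₊ : ℝ≥0∞) ^ p ∂μ := by
        refine lintegral_congr fun x => ?_
        rw [← ENNReal.ofReal_rpow_of_nonneg (abs_nonneg _) hp0.le]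
        congr 1
        rw [← Real.enorm_eq_ofReal (abs_nonneg (f x))]
        simp [Real.nnnorm_abs]
        rfl
      have heL : eLpNorm f (ENNReal.ofReal p) μ = I ^ (1 / p) := by
        rw [eLpNorm_eq_lintegral_rpow_enorm_toReal hpne0 ofReal_ne_top,
          ENNReal.toReal_ofReal hp0.le, hIe]
        rfl
      rw [heL] at hst
      have hpow := ENNReal.rpow_lt_rpow hst hp0
      have hexp : 1 / p * p = 1 := by field_simp
      have hL : (ENNReal.ofReal (γ₀ ^ (1 / p)) * I ^ (1 / p)) ^ p =
          ENNReal.ofReal γ₀ * I := by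
        rw [ENNReal.mul_rpow_of_nonneg _ _ hp0.le]
        congr 1
        · rw [ENNReal.ofReal_rpow_of_nonneg (by positivity) hp0.le]
          congr 1
          rw [← Real.rpow_mul hγ₀0.le, hexp, Real.rpow_one]
        · rw [← ENNReal.rpow_mul, hexp, ENNReal.rpow_one]
      have hR : (ENNReal.ofReal t * μ Set.univ ^ (1 / p)) ^ p =
          ENNReal.ofReal (t ^ p) * μ Set.univ := by
        rw [ENNReal.mul_rpow_of_nonneg _ _ hp0.le]
        congr 1
        · rw [ENNReal.ofReal_rpow_of_nonneg ht.le hp0.le]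
        · rw [← ENNReal.rpow_mul, hexp, ENNReal.rpow_one]
      rw [hL, hR] at hpow
      -- multiply by (ofReal γ₀)⁻¹
      have hg0' : ENNReal.ofReal γ₀ ≠ 0 := by
        simp only [ne_eq, ENNReal.ofReal_eq_zero, not_le]
        exact hγ₀0
      have hkey := (ENNReal.mul_lt_mul_iff_right (a := (ENNReal.ofReal γ₀)⁻¹)
        (ENNReal.inv_ne_zero.2 ofReal_ne_top) (ENNReal.inv_ne_top.2 hg0')).2 hpow
      calc I = (ENNReal.ofReal γ₀)⁻¹ * (ENNReal.ofReal γ₀ * I) := by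
            rw [← mul_assoc, ENNReal.inv_mul_cancel hg0' ofReal_ne_top, one_mul]
        _ < (ENNReal.ofReal γ₀)⁻¹ * (ENNReal.ofReal (t ^ p) * μ Set.univ) := hkey
        _ = ENNReal.ofReal (t ^ p / γ₀) * μ Set.univ := by
            rw [div_eq_mul_inv, ENNReal.ofReal_mul (by positivity),
              ENNReal.ofReal_inv_of_pos hγ₀0]
            ring
  -- choose ρ₀
  obtain ⟨nρ, hnρ⟩ : ∃ n : ℕ, I < ENNReal.ofReal (t ^ p / γ₀) * μ (ball x₀ ((n : ℝ) + 1)) := by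
    have huniv : Set.univ = ⋃ n : ℕ, ball x₀ ((n : ℝ) + 1) := by
      ext z
      simp only [Set.mem_univ, Set.mem_iUnion, true_iff]
      obtain ⟨n, hn⟩ := exists_nat_gt (dist z x₀)
      exact ⟨n, mem_ball.2 (by linarith)⟩
    have hmono : Monotone fun n : ℕ => ball x₀ ((n : ℝ) + 1) := by
      intro i j hij
      refine ball_subset_ball ?_
      have : (i : ℝ) ≤ (j : ℝ) := Nat.cast_le.2 hij
      linarith
    have hsup : μ Set.univ = ⨆ n : ℕ, μ (ball x₀ ((n : ℝ) + 1)) := by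
      rw [huniv]
      exact hmono.directed_le.measure_iUnion
    rw [hsup, ENNReal.mul_iSup] at hIlt
    exact lt_iSup_iff.1 hIlt
  set ρ₀ : ℝ := (nρ : ℝ) + 1 with hρ₀def
  have hρ₀pos : 0 < ρ₀ := by positivity
  -- Good predicate
  set Good : X → ℝ → Prop := fun cc rad =>
    ENNReal.ofReal (t ^ p / γ₀) * μ (ball cc (6 ^ 2 * rad)) <
      ∫⁻ x in ball cc rad, ENNReal.ofReal (|f x| ^ p) ∂μ with hGood
  have hgrow0 : ∀ cc rad, Good cc rad → 36 * rad ≤ ρ₀ + dist cc x₀ := by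
    intro cc rad hgood
    by_contra hcon
    push_neg at hcon
    have hsub : ball x₀ ρ₀ ⊆ ball cc (6 ^ 2 * rad) := by
      intro z hz
      rw [mem_ball] at hz ⊢
      have h1 : dist z cc ≤ dist z x₀ + dist cc x₀ := by
        rw [dist_comm cc x₀]
        exact dist_triangle z x₀ cc
      have : (6 : ℝ) ^ 2 = 36 := by norm_num
      rw [this]
      linarith
    refine absurd hnρ (not_lt.2 ?_)
    calc ENNReal.ofReal (t ^ p / γ₀) * μ (ball x₀ ρ₀)
        ≤ ENNReal.ofReal (t ^ p / γ₀) * μ (ball cc (6 ^ 2 * rad)) :=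
          mul_le_mul_right (measure_mono hsub) _
      _ ≤ ∫⁻ x in ball cc rad, ENNReal.ofReal (|f x| ^ p) ∂μ := (le_of_lt hgood)
      _ ≤ I := by
          rw [hIdef]
          exact setLIntegral_le_lintegral _ _
  -- the set of good centers and chosen radii
  set S : Set X := {x | ∃ rad, 0 < rad ∧ Good x rad} with hSdef
  have hex : ∀ x : X, ∃ rad : ℝ, x ∈ S →
      (0 < rad ∧ Good x rad ∧ ∀ η : ℝ, 2 < η → ¬ Good x (η * rad)) := by
    intro x
    by_cases hx : x ∈ S
    · obtain ⟨r1, hr1pos, hr1good⟩ := hx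
      set Gx : Set ℝ := {rad | 0 < rad ∧ Good x rad} with hGx
      have hGxne : Gx.Nonempty := ⟨r1, hr1pos, hr1good⟩
      have hGxbdd : BddAbove Gx := by
        refine ⟨(ρ₀ + dist x x₀) / 36, fun rad hrad => ?_⟩
        have := hgrow0 x rad hrad.2
        linarith
      set R : ℝ := sSup Gx with hR
      have hRpos : 0 < R := lt_of_lt_of_le hr1pos (le_csSup hGxbdd ⟨hr1pos, hr1good⟩)
      obtain ⟨r2, hr2mem, hr2big⟩ := exists_lt_of_lt_csSup hGxne (by linarith : R / 2 < R)
      refine ⟨r2, fun _ => ⟨hr2mem.1, hr2mem.2, ?_⟩⟩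
      intro η hη hbad
      have h1 : η * r2 ≤ R := le_csSup hGxbdd ⟨by nlinarith [hr2mem.1], hbad⟩
      nlinarith [hr2mem.1]
    · exact ⟨1, fun h => absurd h hx⟩
  choose rad hrad using hex
  -- apply the covering lemma
  obtain ⟨D, hDS, hDc, hDdisj, hDcov⟩ := covering_sel x₀ (ρ₀ / 36) (by positivity) S rad
    (fun x hx => ((hrad x) hx).1)
    (fun x hx => by
      have := hgrow0 x (rad x) ((hrad x) hx).2.1
      linarith)
  -- index type
  obtain ⟨φ, hφinj⟩ := Set.countable_iff_exists_injective.1 hDc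
  set e := Equiv.ofInjective φ hφinj with he
  refine ⟨{n : ℕ // n ∈ Set.range φ}, inferInstance,
    fun j => ((e.symm j : ↥D) : X), fun j => rad ((e.symm j : ↥D) : X), ?_, ?_, ?_, ?_, ?_⟩
  · intro j
    exact ((hrad _) (hDS (e.symm j).2)).1
  · intro i j hij
    have hne : ((e.symm i : ↥D) : X) ≠ ((e.symm j : ↥D) : X) := by
      intro hcon
      exact hij (by
        have : (e.symm i : ↥D) = (e.symm j : ↥D) := Subtype.ext hcon
        have := congrArg e this
        simpa using this)
    exact hDdisj (e.symm i).2 (e.symm j).2 hne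
  · intro j
    exact ((hrad _) (hDS (e.symm j).2)).2.1
  · intro j η hη
    have hnot := ((hrad _) (hDS (e.symm j).2)).2.2 η hη
    simp only [hGood] at hnot
    dsimp only
    rw [show (6 : ℝ) ^ 2 * η * rad ((e.symm j : ↥D) : X) =
      6 ^ 2 * (η * rad ((e.symm j : ↥D) : X)) by ring]
    exact not_lt.1 hnot
  · filter_upwards [H.ae_good_ball γ₀ hγN g hgint hg0] with x hx hxU
    by_contra habs
    push_neg at habs
    have hb : t ^ p < g x := Real.rpow_lt_rpow ht.le habs hp0
    obtain ⟨rv, hrvpos, hrv⟩ := hx (t ^ p) (Real.rpow_nonneg ht.le p) hb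
    have hxS : x ∈ S := by
      refine ⟨rv, hrvpos, ?_⟩
      simp only [hGood]
      rw [show (6 : ℝ) ^ 2 * rv = 36 * rv by norm_num]
      exact hrv
    obtain ⟨y, hyD, hxball⟩ := hDcov x hxS
    refine hxU (Set.mem_iUnion.2 ⟨e ⟨y, hyD⟩, ?_⟩)
    have hsimp : ((e.symm (e ⟨y, hyD⟩) : ↥D) : X) = y := by
      rw [Equiv.symm_apply_apply]
    rw [hsimp]
    exact hxball
end

section
/- Let (X,d,μ) be a metric measure space of non-homogeneous type and r ∈ (0,1). Then there exists a positive constant C_r, depending on r, such that for every function f with |f|^r ∈ L¹_loc(μ) and every x ∈ X, M^♯_r f(x) := [M^♯(|f|^r)(x)]^{1/r} ≤ C_r · M^♯ f(x). -/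
open MeasureTheory Metric ENNReal Filter

noncomputable section
namespace Aux15
variable {X : Type*} [MetricSpace X] [MeasurableSpace X] [BorelSpace X]
variable {μ : Measure X}

set_option linter.unusedSectionVars false

variable {X : Type*} [MetricSpace X] [MeasurableSpace X] [BorelSpace X]
variable {μ : Measure X}

theorem ball_cover (H : NonHomSpace X μ) (n : ℕ) :
    ∀ (x : X) (r : ℝ), 0 < r → ∃ t : Set X, t.Finite ∧
      ball x r ⊆ ⋃ y ∈ t, ball y (r / 2 ^ n) := by
  induction n with
  | zero => intro x r hr; exact ⟨{x}, Set.finite_singleton x, by simp⟩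
  | succ n ih =>
    intro x r hr
    obtain ⟨s, _, hs⟩ := H.geom x r hr
    choose t ht hsub using fun y : X => ih y (r / 2) (by positivity)
    refine ⟨⋃ y ∈ (s : Set X), t y, s.finite_toSet.biUnion (fun y _ => ht y), ?_⟩
    intro z hz
    obtain ⟨y, hy, hzy⟩ := Set.mem_iUnion₂.1 (hs hz)
    have := hsub y hzy
    obtain ⟨w, hw, hzw⟩ := Set.mem_iUnion₂.1 this
    refine Set.mem_iUnion₂.2 ⟨w, Set.mem_iUnion₂.2 ⟨y, hy, hw⟩, ?_⟩
    have : r / 2 / 2 ^ n = r / 2 ^ (n + 1) := by ring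
    rwa [this] at hzw

theorem totallyBounded_ball (H : NonHomSpace X μ) (x : X) (r : ℝ) :
    TotallyBounded (ball x r) := by
  rcases le_or_gt r 0 with hr | hr
  · rw [ball_eq_empty.2 hr]; exact totallyBounded_empty
  · rw [Metric.totallyBounded_iff]
    intro ε hε
    obtain ⟨n, hn⟩ := pow_unbounded_of_one_lt (r / ε) (one_lt_two (α := ℝ))
    obtain ⟨t, htf, hts⟩ := ball_cover H n x r hr
    refine ⟨t, htf, hts.trans ?_⟩
    apply Set.iUnion₂_mono
    intro y _
    apply ball_subset_ball
    rw [div_le_iff₀ (by positivity : (0:ℝ) < 2 ^ n)]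
    rw [div_lt_iff₀ hε] at hn
    nlinarith [pow_pos (zero_lt_two (α := ℝ)) n]

theorem secondCountable (H : NonHomSpace X μ) : SecondCountableTopology X := by
  rcases isEmpty_or_nonempty X with h | h
  · infer_instance
  obtain ⟨x₀⟩ := h
  have : TopologicalSpace.SeparableSpace X := by
    rw [← TopologicalSpace.isSeparable_univ_iff]
    have : (Set.univ : Set X) = ⋃ n : ℕ, ball x₀ (n + 1) := by
      ext z; simp only [Set.mem_univ, Set.mem_iUnion, mem_ball, true_iff]
      obtain ⟨n, hn⟩ := exists_nat_gt (dist z x₀)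
      exact ⟨n, by linarith⟩
    rw [this]
    exact TopologicalSpace.IsSeparable.iUnion fun n =>
      (totallyBounded_ball H x₀ _).isSeparable
  exact UniformSpace.secondCountable_of_separable X



theorem measure_ball_ne_top (H : NonHomSpace X μ) (c : X) (ρ : ℝ) :
    μ (ball c ρ) ≠ ⊤ := by
  rcases le_or_gt ρ 0 with hρ | hρ
  · rw [ball_eq_empty.2 hρ]; simp
  · exact ((H.measure_ball_le c ρ hρ).trans_lt ofReal_lt_top).ne

theorem clam_pos (H : NonHomSpace X μ) : 0 < H.Clam := lt_trans one_pos H.Clam_gt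

theorem beta_gt (H : NonHomSpace X μ) : H.Clam ^ 3 < betaRho H.Clam H.N₀ 6 := by
  set ν := Real.logb 2 H.Clam with hν_def
  have hν : 0 < ν := Real.logb_pos one_lt_two H.Clam_gt
  have h2ν : (2 : ℝ) ^ ν = H.Clam := Real.rpow_logb two_pos (by norm_num) (clam_pos H)
  set a := Real.logb 2 (H.N₀ : ℝ)
  have hmax : ν ≤ max a ν := le_max_right _ _
  have key : H.Clam ^ 3 ≤ (6 : ℝ) ^ (3 * max a ν) := by
    calc H.Clam ^ 3 = ((2 : ℝ) ^ ν) ^ (3 : ℕ) := by rw [h2ν]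
    _ = (2 : ℝ) ^ (ν * 3) := by
        rw [← Real.rpow_natCast ((2:ℝ) ^ ν) 3, ← Real.rpow_mul (by norm_num)]
        norm_num
    _ ≤ (2 : ℝ) ^ (3 * max a ν) := by
        apply Real.rpow_le_rpow_of_exponent_le one_le_two
        nlinarith [le_max_right a ν]
    _ ≤ (6 : ℝ) ^ (3 * max a ν) := by
        apply Real.rpow_le_rpow (by norm_num) (by norm_num)
        nlinarith [le_max_right a ν]
  have h30a : (0:ℝ) < max (5 * 6) 30 ^ a := Real.rpow_pos_of_pos (by norm_num) _
  have h30ν : (0:ℝ) < max (3 * 6) 30 ^ ν := Real.rpow_pos_of_pos (by norm_num) _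
  unfold betaRho
  nlinarith

theorem beta_pos (H : NonHomSpace X μ) : 0 < betaRho H.Clam H.N₀ 6 :=
  lt_trans (pow_pos (clam_pos H) 3) (beta_gt H)

theorem lam_six (H : NonHomSpace X μ) (c : X) (s : ℝ) (hs : 0 < s) :
    H.lam c (6 * s) ≤ H.Clam ^ 3 * H.lam c s := by
  have hC := clam_pos H
  have h8 : H.lam c (8 * s) ≤ H.Clam * H.lam c (4 * s) := by
    have := H.lam_half c (8 * s) (by positivity)
    rwa [show (8:ℝ) * s / 2 = 4 * s by ring] at this
  have h4 : H.lam c (4 * s) ≤ H.Clam * H.lam c (2 * s) := by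
    have := H.lam_half c (4 * s) (by positivity)
    rwa [show (4:ℝ) * s / 2 = 2 * s by ring] at this
  have h2 : H.lam c (2 * s) ≤ H.Clam * H.lam c s := by
    have := H.lam_half c (2 * s) (by positivity)
    rwa [show (2:ℝ) * s / 2 = s by ring] at this
  have h68 : H.lam c (6 * s) ≤ H.lam c (8 * s) :=
    H.lam_mono c _ _ (by positivity) (by linarith)
  calc H.lam c (6 * s) ≤ H.lam c (8 * s) := h68
  _ ≤ H.Clam * H.lam c (4 * s) := h8
  _ ≤ H.Clam * (H.Clam * H.lam c (2 * s)) := mul_le_mul_of_nonneg_left h4 hC.le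
  _ ≤ H.Clam * (H.Clam * (H.Clam * H.lam c s)) := by
      apply mul_le_mul_of_nonneg_left _ hC.le
      exact mul_le_mul_of_nonneg_left h2 hC.le
  _ = H.Clam ^ 3 * H.lam c s := by ring

theorem lam_pow_six (H : NonHomSpace X μ) (c : X) (ρ : ℝ) (hρ : 0 < ρ) (j : ℕ) :
    H.lam c (6 ^ j * ρ) ≤ (H.Clam ^ 3) ^ j * H.lam c ρ := by
  induction j with
  | zero => simp
  | succ j ih =>
    have h6 : (6:ℝ) ^ (j+1) * ρ = 6 * (6 ^ j * ρ) := by ring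
    rw [h6]
    calc H.lam c (6 * (6 ^ j * ρ)) ≤ H.Clam ^ 3 * H.lam c (6 ^ j * ρ) :=
          lam_six H c _ (by positivity)
    _ ≤ H.Clam ^ 3 * ((H.Clam ^ 3) ^ j * H.lam c ρ) := by
        have := clam_pos H
        apply mul_le_mul_of_nonneg_left ih (by positivity)
    _ = (H.Clam ^ 3) ^ (j + 1) * H.lam c ρ := by ring

theorem doubling_exists (H : NonHomSpace X μ) (c : X) (ρ : ℝ) (hρ : 0 < ρ) :
    ∃ j : ℕ, IsDoubling μ 6 (betaRho H.Clam H.N₀ 6) c (6 ^ j * ρ) := by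
  set β := betaRho H.Clam H.N₀ 6 with hβ_def
  have hβ := beta_pos H
  have hA : (0:ℝ) < H.Clam ^ 3 := pow_pos (clam_pos H) 3
  by_contra h
  push_neg at h
  have h' : ∀ j : ℕ, ENNReal.ofReal β * μ (ball c (6 ^ j * ρ)) < μ (ball c (6 ^ (j+1) * ρ)) := by
    intro j
    have := h j
    rw [IsDoubling, not_le] at this
    rwa [show (6:ℝ) * (6 ^ j * ρ) = 6 ^ (j+1) * ρ by ring] at this
  -- find j₀ with positive measure
  obtain ⟨j₀, hj₀⟩ : ∃ j₀ : ℕ, 0 < μ (ball c (6 ^ j₀ * ρ)) := by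
    by_cases h0 : μ (ball c (6 ^ 0 * ρ)) = 0
    · refine ⟨1, ?_⟩
      have := h' 0
      rw [h0, mul_zero] at this
      exact this
    · exact ⟨0, pos_iff_ne_zero.2 h0⟩
  set m₀ := μ (ball c (6 ^ j₀ * ρ)) with hm₀
  have hm₀top : m₀ ≠ ⊤ := measure_ball_ne_top H c _
  have hlow : ∀ k : ℕ, (ENNReal.ofReal β) ^ k * m₀ ≤ μ (ball c (6 ^ (j₀ + k) * ρ)) := by
    intro k
    induction k with
    | zero => simp [hm₀]
    | succ k ih =>
      calc (ENNReal.ofReal β) ^ (k+1) * m₀ = ENNReal.ofReal β * ((ENNReal.ofReal β) ^ k * m₀) := by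
            ring
      _ ≤ ENNReal.ofReal β * μ (ball c (6 ^ (j₀ + k) * ρ)) := by gcongr
      _ ≤ μ (ball c (6 ^ (j₀ + k + 1) * ρ)) := (h' (j₀ + k)).le
      _ = μ (ball c (6 ^ (j₀ + (k + 1)) * ρ)) := by ring_nf
  have hup : ∀ k : ℕ, μ (ball c (6 ^ (j₀ + k) * ρ)) ≤
      ENNReal.ofReal ((H.Clam ^ 3) ^ (j₀ + k) * H.lam c ρ) := by
    intro k
    exact (H.measure_ball_le c _ (by positivity)).trans
      (ENNReal.ofReal_le_ofReal (lam_pow_six H c ρ hρ _))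
  -- pass to reals
  have hreal : ∀ k : ℕ, β ^ k * m₀.toReal ≤ (H.Clam ^ 3) ^ (j₀ + k) * H.lam c ρ := by
    intro k
    have h1 : ENNReal.ofReal (β ^ k * m₀.toReal) ≤
        ENNReal.ofReal ((H.Clam ^ 3) ^ (j₀ + k) * H.lam c ρ) := by
      rw [ENNReal.ofReal_mul (by positivity), ENNReal.ofReal_toReal hm₀top,
        ENNReal.ofReal_pow hβ.le]
      exact (hlow k).trans (hup k)
    have h2 : (0:ℝ) ≤ (H.Clam ^ 3) ^ (j₀ + k) * H.lam c ρ := by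
      have := H.lam_pos c ρ hρ
      have := clam_pos H
      positivity
    exact (ENNReal.ofReal_le_ofReal_iff h2).1 h1
  have hm₀pos : 0 < m₀.toReal := ENNReal.toReal_pos hj₀.ne' hm₀top
  have hquot : 1 < β / H.Clam ^ 3 := (one_lt_div hA).2 (beta_gt H)
  obtain ⟨k, hk⟩ := pow_unbounded_of_one_lt
    ((H.Clam ^ 3) ^ j₀ * H.lam c ρ / m₀.toReal) hquot
  have := hreal k
  rw [div_pow] at hk
  rw [div_lt_div_iff₀ hm₀pos (by positivity)] at hk
  rw [pow_add] at this
  nlinarith [H.lam_pos c ρ hρ, pow_pos hA j₀, pow_pos hA k, pow_pos hβ k]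

section Tilde
variable (H : NonHomSpace X μ)

theorem tildeRad_doubling (c : X) {ρ : ℝ} (hρ : 0 < ρ) :
    IsDoubling μ 6 (betaRho H.Clam H.N₀ 6) c (tildeRad μ 6 (betaRho H.Clam H.N₀ 6) c ρ) := by
  have hne : {j : ℕ | IsDoubling μ 6 (betaRho H.Clam H.N₀ 6) c (6 ^ j * ρ)}.Nonempty :=
    doubling_exists H c ρ hρ
  exact Nat.sInf_mem hne

theorem le_tildeRad (β : ℝ) (c : X) {ρ : ℝ} (hρ : 0 < ρ) : ρ ≤ tildeRad μ 6 β c ρ := by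
  unfold tildeRad
  nlinarith [one_le_pow₀ (by norm_num : (1:ℝ) ≤ 6) (n :=  doublingIdx μ 6 β c ρ)]

theorem tildeRad_pos (β : ℝ) (c : X) {ρ : ℝ} (hρ : 0 < ρ) : 0 < tildeRad μ 6 β c ρ :=
  lt_of_lt_of_le hρ (le_tildeRad β c hρ)

theorem tildeRad_idem (c : X) {ρ : ℝ} (hρ : 0 < ρ) :
    tildeRad μ 6 (betaRho H.Clam H.N₀ 6) c (tildeRad μ 6 (betaRho H.Clam H.N₀ 6) c ρ) =
      tildeRad μ 6 (betaRho H.Clam H.N₀ 6) c ρ := by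
  set β := betaRho H.Clam H.N₀ 6
  have h0 : doublingIdx μ 6 β c (tildeRad μ 6 β c ρ) = 0 := by
    apply Nat.sInf_eq_zero.2
    left
    have := tildeRad_doubling H c hρ
    simpa [Set.mem_setOf_eq] using this
  rw [tildeRad, h0]
  norm_num

theorem one_le_Ktilde (c : X) {ρ : ℝ} (hρ : 0 < ρ) (ρ' : ℝ) :
    1 ≤ Ktilde μ H.lam 6 c ρ ρ' := by
  unfold Ktilde
  apply le_add_of_nonneg_right
  apply Finset.sum_nonneg
  intro k _
  apply div_nonneg ENNReal.toReal_nonneg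
  exact (H.lam_pos c _ (by positivity)).le

end Tilde

theorem abs_rpow_sub_rpow_le {r : ℝ} (hr0 : 0 < r) (hr1 : r ≤ 1) {a b : ℝ}
    (ha : 0 ≤ a) (hb : 0 ≤ b) : |a ^ r - b ^ r| ≤ |a - b| ^ r := by
  have key : ∀ u v : ℝ, 0 ≤ u → 0 ≤ v → v ≤ u → u ^ r - v ^ r ≤ (u - v) ^ r := by
    intro u v hu hv huv
    have h := NNReal.rpow_add_le_add_rpow (v.toNNReal) ((u - v).toNNReal) hr0.le hr1
    have hsum : v.toNNReal + (u - v).toNNReal = u.toNNReal := by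
      rw [← Real.toNNReal_add hv (by linarith)]
      norm_num
    rw [hsum] at h
    have hcoe : (u.toNNReal : ℝ) ^ r ≤ (v.toNNReal : ℝ) ^ r + ((u - v).toNNReal : ℝ) ^ r := by
      exact_mod_cast h
    rw [Real.coe_toNNReal v hv, Real.coe_toNNReal u hu,
      Real.coe_toNNReal (u - v) (by linarith)] at hcoe
    linarith
  rcases le_total b a with hab | hab
  · rw [abs_of_nonneg (by linarith : (0:ℝ) ≤ a - b),
      abs_of_nonneg (sub_nonneg.2 (Real.rpow_le_rpow hb hab hr0.le))]
    exact key a b ha hb hab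
  · rw [abs_sub_comm, abs_sub_comm a b,
      abs_of_nonneg (by linarith : (0:ℝ) ≤ b - a),
      abs_of_nonneg (sub_nonneg.2 (Real.rpow_le_rpow ha hab hr0.le))]
    exact key b a hb ha hab

theorem lintegral_rpow_le (ν : Measure X) {u : X → ℝ≥0∞} (hu : AEMeasurable u ν)
    {r : ℝ} (hr0 : 0 < r) (hr1 : r < 1) :
    ∫⁻ y, (u y) ^ r ∂ν ≤ (∫⁻ y, u y ∂ν) ^ r * (ν Set.univ) ^ (1 - r) := by
  have hpq : (r⁻¹).HolderConjugate ((1 - r)⁻¹) :=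
    Real.HolderConjugate.inv_one_sub_inv hr0 hr1
  have h := ENNReal.lintegral_mul_le_Lp_mul_Lq ν hpq
    (hu.pow_const r) (aemeasurable_const (b := (1 : ℝ≥0∞)))
  simp only [Pi.mul_apply, mul_one, ENNReal.one_rpow, lintegral_const,
    one_mul] at h
  calc ∫⁻ y, (u y) ^ r ∂ν ≤
      (∫⁻ y, ((u y) ^ r) ^ r⁻¹ ∂ν) ^ (1 / r⁻¹) * (ν Set.univ) ^ (1 / (1 - r)⁻¹) := h
  _ = (∫⁻ y, u y ∂ν) ^ r * (ν Set.univ) ^ (1 - r) := by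
      congr 1
      · congr 1
        · apply lintegral_congr
          intro y
          rw [← ENNReal.rpow_mul, mul_inv_cancel₀ hr0.ne', ENNReal.rpow_one]
        · rw [one_div, inv_inv]
      · rw [one_div, inv_inv]

section Sharp
variable (H : NonHomSpace X μ) {f : X → ℝ} {x : X}

theorem le_sharpMax_fst {c : X} {ρ : ℝ} (hρ : 0 < ρ) (hx : x ∈ ball c ρ) :
    (∫⁻ y in ball c ρ, ENNReal.ofReal
        |f y - mAvg μ (ball c (tildeRad μ 6 (betaRho H.Clam H.N₀ 6) c ρ)) f| ∂μ) /
      μ (ball c (6 * ρ)) ≤ sharpMax μ H.lam (betaRho H.Clam H.N₀ 6) f x := by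
  refine le_trans ?_ le_self_add
  refine le_iSup_of_le c ?_
  refine le_iSup_of_le ρ ?_
  refine le_iSup_of_le hρ ?_
  exact le_iSup_of_le hx le_rfl

theorem le_sharpMax_snd {c c' : X} {ρ ρ' : ℝ} (hρ : 0 < ρ) (hρ' : 0 < ρ')
    (hx : x ∈ ball c ρ) (hsub : ball c ρ ⊆ ball c' ρ')
    (hdb : IsDoubling μ 6 (betaRho H.Clam H.N₀ 6) c ρ)
    (hdb' : IsDoubling μ 6 (betaRho H.Clam H.N₀ 6) c' ρ') :
    ENNReal.ofReal (|mAvg μ (ball c ρ) f - mAvg μ (ball c' ρ') f| /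
        Ktilde μ H.lam 6 c ρ ρ') ≤ sharpMax μ H.lam (betaRho H.Clam H.N₀ 6) f x := by
  refine le_trans ?_ le_add_self
  refine le_iSup_of_le c ?_
  refine le_iSup_of_le ρ ?_
  refine le_iSup_of_le c' ?_
  refine le_iSup_of_le ρ' ?_
  refine le_iSup_of_le hρ ?_
  refine le_iSup_of_le hρ' ?_
  refine le_iSup_of_le hx ?_
  refine le_iSup_of_le hsub ?_
  refine le_iSup_of_le hdb ?_
  exact le_iSup_of_le hdb' le_rfl

theorem fst_prod_bound {c : X} {ρ : ℝ} (hρ : 0 < ρ) (hx : x ∈ ball c ρ) :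
    (∫⁻ y in ball c ρ, ENNReal.ofReal
        |f y - mAvg μ (ball c (tildeRad μ 6 (betaRho H.Clam H.N₀ 6) c ρ)) f| ∂μ) ≤
      sharpMax μ H.lam (betaRho H.Clam H.N₀ 6) f x * μ (ball c (6 * ρ)) := by
  by_cases h6 : μ (ball c (6 * ρ)) = 0
  · have hB : μ (ball c ρ) = 0 :=
      measure_mono_null (ball_subset_ball (by linarith)) h6
    rw [setLIntegral_measure_zero _ _ hB]
    exact zero_le
  · exact (ENNReal.div_le_iff h6 (measure_ball_ne_top H c _)).1
      (le_sharpMax_fst H hρ hx)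

theorem f_lint_finite (hM : sharpMax μ H.lam (betaRho H.Clam H.N₀ 6) f x ≠ ⊤)
    (c : X) (ρ : ℝ) : (∫⁻ y in ball c ρ, ENNReal.ofReal |f y| ∂μ) < ⊤ := by
  set β := betaRho H.Clam H.N₀ 6 with hβ
  set R : ℝ := |ρ| + dist c x + 1 with hR
  have hRpos : 0 < R := by positivity
  have hxR : x ∈ ball x R := mem_ball_self hRpos
  have hsub : ball c ρ ⊆ ball x R := by
    intro z hz
    rw [mem_ball] at hz ⊢
    have h1 : dist z x ≤ dist z c + dist c x := dist_triangle z c x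
    have h2 : ρ ≤ |ρ| := le_abs_self ρ
    linarith
  set m₀ := mAvg μ (ball x (tildeRad μ 6 β x R)) f with hm₀
  have step1 : (∫⁻ y in ball c ρ, ENNReal.ofReal |f y| ∂μ) ≤
      ∫⁻ y in ball x R, ENNReal.ofReal |f y| ∂μ := lintegral_mono_set hsub
  have step2 : (∫⁻ y in ball x R, ENNReal.ofReal |f y| ∂μ) ≤
      (∫⁻ y in ball x R, ENNReal.ofReal |f y - m₀| ∂μ) +
        ENNReal.ofReal |m₀| * μ (ball x R) := by
    rw [← setLIntegral_const (ball x R) (ENNReal.ofReal |m₀|),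
      ← lintegral_add_right _ measurable_const]
    apply lintegral_mono
    intro y
    calc ENNReal.ofReal |f y| ≤ ENNReal.ofReal (|f y - m₀| + |m₀|) := by
          apply ENNReal.ofReal_le_ofReal
          have := abs_sub_abs_le_abs_sub (f y) m₀
          have h := abs_sub (f y) m₀
          calc |f y| = |(f y - m₀) + m₀| := by ring_nf
          _ ≤ |f y - m₀| + |m₀| := abs_add_le _ _
    _ ≤ ENNReal.ofReal |f y - m₀| + ENNReal.ofReal |m₀| := ENNReal.ofReal_add_le
  have step3 : (∫⁻ y in ball x R, ENNReal.ofReal |f y - m₀| ∂μ) < ⊤ :=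
    lt_of_le_of_lt (fst_prod_bound H hRpos hxR)
      (ENNReal.mul_lt_top hM.lt_top (measure_ball_ne_top H x _).lt_top)
  calc (∫⁻ y in ball c ρ, ENNReal.ofReal |f y| ∂μ) ≤ _ := step1
  _ ≤ _ := step2
  _ < ⊤ := ENNReal.add_lt_top.2 ⟨step3,
      ENNReal.mul_lt_top ofReal_lt_top (measure_ball_ne_top H x R).lt_top⟩

end Sharp

theorem rpow_add_le {r : ℝ} (hr0 : 0 < r) (hr1 : r ≤ 1) {u v : ℝ}
    (hu : 0 ≤ u) (hv : 0 ≤ v) : (u + v) ^ r ≤ u ^ r + v ^ r := by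
  have h := NNReal.rpow_add_le_add_rpow (u.toNNReal) (v.toNNReal) hr0.le hr1
  rw [← Real.toNNReal_add hu hv] at h
  have hcoe : ((u + v).toNNReal : ℝ) ^ r ≤
      (u.toNNReal : ℝ) ^ r + (v.toNNReal : ℝ) ^ r := by exact_mod_cast h
  rwa [Real.coe_toNNReal _ (by linarith), Real.coe_toNNReal u hu,
    Real.coe_toNNReal v hv] at hcoe

theorem rpow_le_one_add {r : ℝ} (hr0 : 0 < r) (hr1 : r ≤ 1) {t : ℝ} (ht : 0 ≤ t) :
    t ^ r ≤ 1 + t := by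
  rcases le_or_gt t 1 with h | h
  · have : t ^ r ≤ 1 := Real.rpow_le_one ht h hr0.le
    linarith
  · have : t ^ r ≤ t ^ (1:ℝ) := Real.rpow_le_rpow_of_exponent_le h.le hr1
    rw [Real.rpow_one] at this
    linarith

section G
variable (H : NonHomSpace X μ) {f : X → ℝ} {x : X} {r : ℝ}

theorem g_lint_finite (hr0 : 0 < r) (hr1 : r < 1)
    (hM : sharpMax μ H.lam (betaRho H.Clam H.N₀ 6) f x ≠ ⊤)
    (c : X) (ρ : ℝ) : (∫⁻ y in ball c ρ, ENNReal.ofReal (|f y| ^ r) ∂μ) < ⊤ := by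
  have step : (∫⁻ y in ball c ρ, ENNReal.ofReal (|f y| ^ r) ∂μ) ≤
      (∫⁻ y in ball c ρ, ENNReal.ofReal |f y| ∂μ) + 1 * μ (ball c ρ) := by
    rw [← setLIntegral_const (ball c ρ) 1, ← lintegral_add_right _ measurable_const]
    apply lintegral_mono
    intro y
    calc ENNReal.ofReal (|f y| ^ r) ≤ ENNReal.ofReal (1 + |f y|) :=
          ENNReal.ofReal_le_ofReal (rpow_le_one_add hr0 hr1.le (abs_nonneg _))
    _ ≤ 1 + ENNReal.ofReal |f y| := by
        rw [ENNReal.ofReal_add zero_le_one (abs_nonneg _), ENNReal.ofReal_one]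
    _ = ENNReal.ofReal |f y| + 1 := add_comm _ _
  exact lt_of_le_of_lt step (ENNReal.add_lt_top.2 ⟨f_lint_finite H hM c ρ,
    ENNReal.mul_lt_top one_lt_top (measure_ball_ne_top H c ρ).lt_top⟩)

include H in
theorem absf_aesm (hr0 : 0 < r)
    (hg : LocallyIntegrable (fun y => |f y| ^ r) μ) :
    AEStronglyMeasurable (fun y => |f y|) μ := by
  have : SecondCountableTopology X := secondCountable H
  have hgm : AEStronglyMeasurable (fun y => |f y| ^ r) μ := hg.aestronglyMeasurable
  have hcont : Continuous fun t : ℝ => t ^ (1 / r) := by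
    apply continuous_iff_continuousAt.2
    intro t
    exact Real.continuousAt_rpow_const t (1 / r) (Or.inr (by positivity))
  have := hcont.comp_aestronglyMeasurable hgm
  convert this using 1
  funext y
  show |f y| = (|f y| ^ r) ^ (1 / r)
  rw [← Real.rpow_mul (abs_nonneg _), mul_one_div, div_self hr0.ne', Real.rpow_one]

theorem gIntOn (hr0 : 0 < r) (hr1 : r < 1)
    (hM : sharpMax μ H.lam (betaRho H.Clam H.N₀ 6) f x ≠ ⊤)
    (hg : LocallyIntegrable (fun y => |f y| ^ r) μ)
    (c : X) (ρ : ℝ) : IntegrableOn (fun y => |f y| ^ r) (ball c ρ) μ := by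
  have : SecondCountableTopology X := secondCountable H
  constructor
  · exact hg.aestronglyMeasurable.restrict
  · rw [hasFiniteIntegral_iff_ofReal]
    · exact g_lint_finite H hr0 hr1 hM c ρ
    · filter_upwards with y
      positivity

end G

section Key
variable (H : NonHomSpace X μ) {f : X → ℝ} {x : X} {r : ℝ}

theorem key_avg (hr0 : 0 < r) (hr1 : r < 1)
    (hM : sharpMax μ H.lam (betaRho H.Clam H.N₀ 6) f x ≠ ⊤)
    (habs : AEStronglyMeasurable (fun y => |f y|) μ)
    (hg : LocallyIntegrable (fun y => |f y| ^ r) μ)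
    {c : X} {ρ : ℝ} (hρ : 0 < ρ) (hx : x ∈ ball c ρ)
    (hdb : IsDoubling μ 6 (betaRho H.Clam H.N₀ 6) c ρ) :
    |mAvg μ (ball c ρ) (fun y => |f y| ^ r) - |mAvg μ (ball c ρ) f| ^ r| ≤
      (betaRho H.Clam H.N₀ 6 *
        (sharpMax μ H.lam (betaRho H.Clam H.N₀ 6) f x).toReal) ^ r := by
  set β := betaRho H.Clam H.N₀ 6 with hβdef
  set M := sharpMax μ H.lam β f x with hMdef
  set B := ball c ρ with hBdef
  have hβpos : 0 < β := beta_pos H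
  have hMr : 0 ≤ M.toReal := ENNReal.toReal_nonneg
  by_cases hB0 : μ B = 0
  · have h1 : mAvg μ B (fun y => |f y| ^ r) = 0 := by
      unfold mAvg; rw [hB0]; simp
    have h2 : mAvg μ B f = 0 := by unfold mAvg; rw [hB0]; simp
    rw [h1, h2, abs_zero, Real.zero_rpow hr0.ne', sub_zero, abs_zero]
    positivity
  have hBtop : μ B ≠ ⊤ := measure_ball_ne_top H c ρ
  have ht : 0 < (μ B).toReal := ENNReal.toReal_pos hB0 hBtop
  set t := (μ B).toReal with htdef
  set c₁ := mAvg μ B f with hc₁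
  have htr : tildeRad μ 6 β c ρ = ρ := by
    have h0 : doublingIdx μ 6 β c ρ = 0 := by
      apply Nat.sInf_eq_zero.2; left
      simpa [Set.mem_setOf_eq] using hdb
    rw [tildeRad, h0]; norm_num
  have hlint : (∫⁻ y in B, ENNReal.ofReal |f y - c₁| ∂μ) ≤
      M * ENNReal.ofReal β * μ B := by
    have h1 := fst_prod_bound H (f := f) hρ hx
    rw [htr] at h1
    calc (∫⁻ y in B, ENNReal.ofReal |f y - c₁| ∂μ) ≤ M * μ (ball c (6 * ρ)) := h1
    _ ≤ M * (ENNReal.ofReal β * μ B) := mul_le_mul_right hdb _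
    _ = M * ENNReal.ofReal β * μ B := (mul_assoc _ _ _).symm
  have hgint : IntegrableOn (fun y => |f y| ^ r) B μ := gIntOn H hr0 hr1 hM hg c ρ
  set h : X → ℝ := fun y => abs (|f y| - |c₁|) with hhdef
  have hhaesm : AEStronglyMeasurable h μ := by
    have h2 := (habs.sub (aestronglyMeasurable_const (b := |c₁|))).norm
    simpa [Real.norm_eq_abs, hhdef] using h2
  have hcont : Continuous fun s : ℝ => s ^ r := by
    apply continuous_iff_continuousAt.2
    intro s
    exact Real.continuousAt_rpow_const s r (Or.inr hr0.le)
  have hhr_aesm : AEStronglyMeasurable (fun y => h y ^ r) μ :=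
    hcont.comp_aestronglyMeasurable hhaesm
  have hconst : IntegrableOn (fun _ : X => |c₁| ^ r) B μ :=
    integrableOn_const hBtop
  have hhr_int : IntegrableOn (fun y => h y ^ r) B μ := by
    apply Integrable.mono' (g := fun y => |f y| ^ r + |c₁| ^ r)
    · exact hgint.add hconst
    · exact hhr_aesm.restrict
    · filter_upwards with y
      rw [Real.norm_eq_abs, abs_of_nonneg (Real.rpow_nonneg (abs_nonneg _) r)]
      have hy : h y ≤ |f y| + |c₁| := by
        have h2 := abs_sub (|f y|) (|c₁|)
        simpa [abs_abs] using h2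
      calc h y ^ r ≤ (|f y| + |c₁|) ^ r :=
            Real.rpow_le_rpow (abs_nonneg _) hy hr0.le
      _ ≤ |f y| ^ r + |c₁| ^ r := rpow_add_le hr0 hr1.le (abs_nonneg _) (abs_nonneg _)
  have hstepA : |mAvg μ B (fun y => |f y| ^ r) - |c₁| ^ r| ≤
      (∫ y in B, h y ^ r ∂μ) / t := by
    have heq : mAvg μ B (fun y => |f y| ^ r) - |c₁| ^ r =
        (∫ y in B, (|f y| ^ r - |c₁| ^ r) ∂μ) / t := by
      rw [integral_sub hgint hconst, setIntegral_const]
      unfold mAvg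
      rw [smul_eq_mul, measureReal_def, ← htdef]
      field_simp
    rw [heq, abs_div, abs_of_nonneg ht.le]
    gcongr
    calc |∫ y in B, (|f y| ^ r - |c₁| ^ r) ∂μ| ≤
        ∫ y in B, |(|f y| ^ r - |c₁| ^ r)| ∂μ := by
          have := norm_integral_le_integral_norm (μ := μ.restrict B)
            (f := fun y => |f y| ^ r - |c₁| ^ r)
          simpa [Real.norm_eq_abs] using this
    _ ≤ ∫ y in B, h y ^ r ∂μ := by
        apply integral_mono ((hgint.sub hconst).abs) hhr_int
        intro y
        exact abs_rpow_sub_rpow_le hr0 hr1.le (abs_nonneg _) (abs_nonneg _)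
  have hstepB : (∫ y in B, h y ^ r ∂μ) =
      ((∫⁻ y in B, (ENNReal.ofReal (h y)) ^ r ∂μ)).toReal := by
    rw [integral_eq_lintegral_of_nonneg_ae
      (Filter.Eventually.of_forall fun y => Real.rpow_nonneg (abs_nonneg _) r)
      hhr_aesm.restrict]
    congr 1
    apply lintegral_congr
    intro y
    rw [← ENNReal.ofReal_rpow_of_nonneg (abs_nonneg _) hr0.le]
  have hstepC : (∫⁻ y in B, (ENNReal.ofReal (h y)) ^ r ∂μ) ≤
      (∫⁻ y in B, ENNReal.ofReal (h y) ∂μ) ^ r * (μ B) ^ (1 - r) := by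
    have h2 := lintegral_rpow_le (μ.restrict B)
      (u := fun y => ENNReal.ofReal (h y))
      (hhaesm.restrict.aemeasurable.ennreal_ofReal) hr0 hr1
    simpa [Measure.restrict_apply_univ] using h2
  have hstepD : (∫⁻ y in B, ENNReal.ofReal (h y) ∂μ) ≤ M * ENNReal.ofReal β * μ B := by
    refine le_trans (lintegral_mono fun y => ?_) hlint
    exact ENNReal.ofReal_le_ofReal (abs_abs_sub_abs_le_abs_sub _ _)
  have hprodfin : M * ENNReal.ofReal β * μ B ≠ ⊤ :=
    ENNReal.mul_ne_top (ENNReal.mul_ne_top hM ofReal_ne_top) hBtop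
  have hRHSfin : (M * ENNReal.ofReal β * μ B) ^ r * (μ B) ^ (1 - r) ≠ ⊤ :=
    ENNReal.mul_ne_top (ENNReal.rpow_ne_top_of_nonneg hr0.le hprodfin)
      (ENNReal.rpow_ne_top_of_nonneg (by linarith) hBtop)
  have hE : ((∫⁻ y in B, (ENNReal.ofReal (h y)) ^ r ∂μ)).toReal ≤
      (M.toReal * β * t) ^ r * t ^ (1 - r) := by
    have h2 : (∫⁻ y in B, (ENNReal.ofReal (h y)) ^ r ∂μ) ≤
        (M * ENNReal.ofReal β * μ B) ^ r * (μ B) ^ (1 - r) := by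
      refine hstepC.trans ?_
      gcongr
    calc ((∫⁻ y in B, (ENNReal.ofReal (h y)) ^ r ∂μ)).toReal ≤
        ((M * ENNReal.ofReal β * μ B) ^ r * (μ B) ^ (1 - r)).toReal :=
          ENNReal.toReal_mono hRHSfin h2
    _ = (M.toReal * β * t) ^ r * t ^ (1 - r) := by
        simp [ENNReal.toReal_mul, ← ENNReal.toReal_rpow,
          ENNReal.toReal_ofReal hβpos.le]
        rfl
  calc |mAvg μ B (fun y => |f y| ^ r) - |c₁| ^ r| ≤ (∫ y in B, h y ^ r ∂μ) / t := hstepA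
  _ ≤ ((M.toReal * β * t) ^ r * t ^ (1 - r)) / t := by
      gcongr
      rw [hstepB]
      exact hE
  _ = (β * M.toReal) ^ r := by
      rw [Real.mul_rpow (by positivity) ht.le, mul_assoc, ← Real.rpow_add ht]
      norm_num
      rw [mul_comm M.toReal β, mul_div_assoc, div_self ht.ne']
      ring
end Key

section Terms
variable (H : NonHomSpace X μ) {f : X → ℝ} {x : X} {r : ℝ}

theorem Mpow_eq {M : ℝ≥0∞} (hM : M ≠ ⊤) (hr0 : 0 < r) :
    M ^ r = ENNReal.ofReal (M.toReal ^ r) := by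
  conv_lhs => rw [← ENNReal.ofReal_toReal hM]
  rw [ENNReal.ofReal_rpow_of_nonneg ENNReal.toReal_nonneg hr0.le]

theorem term2_bound (hr0 : 0 < r) (hr1 : r < 1)
    (hM : sharpMax μ H.lam (betaRho H.Clam H.N₀ 6) f x ≠ ⊤)
    (habs : AEStronglyMeasurable (fun y => |f y|) μ)
    (hg : LocallyIntegrable (fun y => |f y| ^ r) μ)
    {c c' : X} {ρ ρ' : ℝ} (hρ : 0 < ρ) (hρ' : 0 < ρ')
    (hx : x ∈ ball c ρ) (hsub : ball c ρ ⊆ ball c' ρ')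
    (hdb : IsDoubling μ 6 (betaRho H.Clam H.N₀ 6) c ρ)
    (hdb' : IsDoubling μ 6 (betaRho H.Clam H.N₀ 6) c' ρ') :
    ENNReal.ofReal (|mAvg μ (ball c ρ) (fun y => |f y| ^ r) -
        mAvg μ (ball c' ρ') (fun y => |f y| ^ r)| / Ktilde μ H.lam 6 c ρ ρ') ≤
      ENNReal.ofReal (1 + 2 * betaRho H.Clam H.N₀ 6 ^ r) *
        sharpMax μ H.lam (betaRho H.Clam H.N₀ 6) f x ^ r := by
  set β := betaRho H.Clam H.N₀ 6 with hβdef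
  set M := sharpMax μ H.lam β f x with hMdef
  set M' := M.toReal with hM'def
  have hβpos : 0 < β := beta_pos H
  have hM'0 : 0 ≤ M' := ENNReal.toReal_nonneg
  set K := Ktilde μ H.lam 6 c ρ ρ' with hKdef
  have hK : 1 ≤ K := one_le_Ktilde H c hρ ρ'
  have hK0 : 0 < K := lt_of_lt_of_le one_pos hK
  have hu1 : |mAvg μ (ball c ρ) (fun y => |f y| ^ r) - |mAvg μ (ball c ρ) f| ^ r| ≤
      (β * M') ^ r := key_avg H hr0 hr1 hM habs hg hρ hx hdb
  have hu3 : |mAvg μ (ball c' ρ') (fun y => |f y| ^ r) - |mAvg μ (ball c' ρ') f| ^ r| ≤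
      (β * M') ^ r := key_avg H hr0 hr1 hM habs hg hρ' (hsub hx) hdb'
  have hΔ : |mAvg μ (ball c ρ) f - mAvg μ (ball c' ρ') f| ≤ M' * K := by
    have h1 := le_sharpMax_snd H (f := f) hρ hρ' hx hsub hdb hdb'
    have h2 : |mAvg μ (ball c ρ) f - mAvg μ (ball c' ρ') f| / K ≤ M' :=
      (ENNReal.ofReal_le_iff_le_toReal hM).1 h1
    calc |mAvg μ (ball c ρ) f - mAvg μ (ball c' ρ') f| =
        |mAvg μ (ball c ρ) f - mAvg μ (ball c' ρ') f| / K * K := by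
          field_simp
    _ ≤ M' * K := mul_le_mul_of_nonneg_right h2 hK0.le
  have hu2 : abs (|mAvg μ (ball c ρ) f| ^ r - |mAvg μ (ball c' ρ') f| ^ r) ≤
      M' ^ r * K ^ r := by
    calc abs (|mAvg μ (ball c ρ) f| ^ r - |mAvg μ (ball c' ρ') f| ^ r) ≤
        abs (|mAvg μ (ball c ρ) f| - |mAvg μ (ball c' ρ') f|) ^ r :=
          abs_rpow_sub_rpow_le hr0 hr1.le (abs_nonneg _) (abs_nonneg _)
    _ ≤ |mAvg μ (ball c ρ) f - mAvg μ (ball c' ρ') f| ^ r :=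
        Real.rpow_le_rpow (abs_nonneg _) (abs_abs_sub_abs_le_abs_sub _ _) hr0.le
    _ ≤ (M' * K) ^ r := Real.rpow_le_rpow (abs_nonneg _) hΔ hr0.le
    _ = M' ^ r * K ^ r := Real.mul_rpow hM'0 hK0.le
  have htot : |mAvg μ (ball c ρ) (fun y => |f y| ^ r) -
      mAvg μ (ball c' ρ') (fun y => |f y| ^ r)| ≤
      2 * (β * M') ^ r + M' ^ r * K ^ r := by
    have := abs_sub_le (mAvg μ (ball c ρ) (fun y => |f y| ^ r))
      (|mAvg μ (ball c ρ) f| ^ r) (mAvg μ (ball c' ρ') (fun y => |f y| ^ r))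
    have h4 := abs_sub_le (|mAvg μ (ball c ρ) f| ^ r) (|mAvg μ (ball c' ρ') f| ^ r)
      (mAvg μ (ball c' ρ') (fun y => |f y| ^ r))
    have h5 : |(|mAvg μ (ball c' ρ') f| ^ r) -
        mAvg μ (ball c' ρ') (fun y => |f y| ^ r)| ≤ (β * M') ^ r := by
      rw [abs_sub_comm]; exact hu3
    linarith
  have hdivK : |mAvg μ (ball c ρ) (fun y => |f y| ^ r) -
      mAvg μ (ball c' ρ') (fun y => |f y| ^ r)| / K ≤ (1 + 2 * β ^ r) * M' ^ r := by
    rw [div_le_iff₀ hK0]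
    have hKr : K ^ r ≤ K := by
      have := Real.rpow_le_rpow_of_exponent_le hK hr1.le
      rwa [Real.rpow_one] at this
    have hβMr : (β * M') ^ r = β ^ r * M' ^ r := Real.mul_rpow hβpos.le hM'0
    have hM'r : 0 ≤ M' ^ r := Real.rpow_nonneg hM'0 r
    have hβr : 0 ≤ β ^ r := Real.rpow_nonneg hβpos.le r
    calc |mAvg μ (ball c ρ) (fun y => |f y| ^ r) -
        mAvg μ (ball c' ρ') (fun y => |f y| ^ r)| ≤
        2 * (β * M') ^ r + M' ^ r * K ^ r := htot
    _ ≤ 2 * (β ^ r * M' ^ r) * K + M' ^ r * K := by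
        rw [hβMr]
        have e1 : M' ^ r * K ^ r ≤ M' ^ r * K := mul_le_mul_of_nonneg_left hKr hM'r
        nlinarith [mul_nonneg (mul_nonneg hβr hM'r) (by linarith : (0:ℝ) ≤ K - 1)]
    _ = (1 + 2 * β ^ r) * M' ^ r * K := by ring
  calc ENNReal.ofReal (|mAvg μ (ball c ρ) (fun y => |f y| ^ r) -
      mAvg μ (ball c' ρ') (fun y => |f y| ^ r)| / K) ≤
      ENNReal.ofReal ((1 + 2 * β ^ r) * M' ^ r) := ENNReal.ofReal_le_ofReal hdivK
  _ = ENNReal.ofReal (1 + 2 * β ^ r) * M ^ r := by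
      rw [ENNReal.ofReal_mul (by positivity), Mpow_eq hM hr0]

end Terms

section Term1
variable (H : NonHomSpace X μ) {f : X → ℝ} {x : X} {r : ℝ}

theorem term1_bound (hr0 : 0 < r) (hr1 : r < 1)
    (hM : sharpMax μ H.lam (betaRho H.Clam H.N₀ 6) f x ≠ ⊤)
    (habs : AEStronglyMeasurable (fun y => |f y|) μ)
    (hg : LocallyIntegrable (fun y => |f y| ^ r) μ)
    {c : X} {ρ : ℝ} (hρ : 0 < ρ) (hx : x ∈ ball c ρ) :
    (∫⁻ y in ball c ρ, ENNReal.ofReal |(fun y => |f y| ^ r) y -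
        mAvg μ (ball c (tildeRad μ 6 (betaRho H.Clam H.N₀ 6) c ρ))
          (fun y => |f y| ^ r)| ∂μ) / μ (ball c (6 * ρ)) ≤
      ENNReal.ofReal (1 + betaRho H.Clam H.N₀ 6 ^ r) *
        sharpMax μ H.lam (betaRho H.Clam H.N₀ 6) f x ^ r := by
  set β := betaRho H.Clam H.N₀ 6 with hβdef
  set M := sharpMax μ H.lam β f x with hMdef
  set M' := M.toReal with hM'def
  have hβpos : 0 < β := beta_pos H
  have hM'0 : 0 ≤ M' := ENNReal.toReal_nonneg
  set B := ball c ρ with hBdef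
  by_cases hB0 : μ B = 0
  · rw [setLIntegral_measure_zero _ _ hB0, ENNReal.zero_div]
    exact zero_le
  have h60 : μ (ball c (6 * ρ)) ≠ 0 := by
    intro hcon
    exact hB0 (measure_mono_null (ball_subset_ball (by linarith)) hcon)
  have h6top : μ (ball c (6 * ρ)) ≠ ⊤ := measure_ball_ne_top H c _
  set ρt := tildeRad μ 6 β c ρ with hρt
  have hρtpos : 0 < ρt := tildeRad_pos β c hρ
  have hsubt : B ⊆ ball c ρt := ball_subset_ball (le_tildeRad β c hρ)
  have hdbt : IsDoubling μ 6 β c ρt := tildeRad_doubling H c hρ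
  set c₀ := mAvg μ (ball c ρt) f with hc₀
  set A := |c₀| ^ r with hA
  set m' := mAvg μ (ball c ρt) (fun y => |f y| ^ r) with hm'
  have hP2abs : |m' - A| ≤ (β * M') ^ r :=
    key_avg H hr0 hr1 hM habs hg hρtpos (hsubt hx) hdbt
  set h : X → ℝ := fun y => abs (|f y| - |c₀|) with hhdef
  have hhaesm : AEStronglyMeasurable h μ := by
    have h2 := (habs.sub (aestronglyMeasurable_const (b := |c₀|))).norm
    simpa [Real.norm_eq_abs, hhdef] using h2
  -- numerator split
  have hsplit : (∫⁻ y in B, ENNReal.ofReal |(|f y| ^ r) - m'| ∂μ) ≤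
      (∫⁻ y in B, ENNReal.ofReal |(|f y| ^ r) - A| ∂μ) +
        ENNReal.ofReal |A - m'| * μ B := by
    rw [← setLIntegral_const B (ENNReal.ofReal |A - m'|),
      ← lintegral_add_right _ measurable_const]
    apply lintegral_mono
    intro y
    calc ENNReal.ofReal |(|f y| ^ r) - m'| ≤
        ENNReal.ofReal (|(|f y| ^ r) - A| + |A - m'|) := by
          apply ENNReal.ofReal_le_ofReal
          exact abs_sub_le _ _ _
    _ ≤ ENNReal.ofReal |(|f y| ^ r) - A| + ENNReal.ofReal |A - m'| :=
        ENNReal.ofReal_add_le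
  -- P1
  have hfc₀ : (∫⁻ y in B, ENNReal.ofReal |f y - c₀| ∂μ) ≤ M * μ (ball c (6 * ρ)) :=
    fst_prod_bound H hρ hx
  have hP1 : (∫⁻ y in B, ENNReal.ofReal |(|f y| ^ r) - A| ∂μ) ≤
      M ^ r * μ (ball c (6 * ρ)) := by
    have hpw : ∀ y, ENNReal.ofReal |(|f y| ^ r) - A| ≤ (ENNReal.ofReal (h y)) ^ r := by
      intro y
      rw [ENNReal.ofReal_rpow_of_nonneg (abs_nonneg _) hr0.le]
      apply ENNReal.ofReal_le_ofReal
      exact abs_rpow_sub_rpow_le hr0 hr1.le (abs_nonneg _) (abs_nonneg _)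
    have hhold : (∫⁻ y in B, (ENNReal.ofReal (h y)) ^ r ∂μ) ≤
        (∫⁻ y in B, ENNReal.ofReal (h y) ∂μ) ^ r * (μ B) ^ (1 - r) := by
      have h2 := lintegral_rpow_le (μ.restrict B)
        (u := fun y => ENNReal.ofReal (h y))
        (hhaesm.restrict.aemeasurable.ennreal_ofReal) hr0 hr1
      simpa [Measure.restrict_apply_univ] using h2
    have hhle : (∫⁻ y in B, ENNReal.ofReal (h y) ∂μ) ≤ M * μ (ball c (6 * ρ)) := by
      refine le_trans (lintegral_mono fun y => ?_) hfc₀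
      exact ENNReal.ofReal_le_ofReal (abs_abs_sub_abs_le_abs_sub _ _)
    calc (∫⁻ y in B, ENNReal.ofReal |(|f y| ^ r) - A| ∂μ) ≤
        ∫⁻ y in B, (ENNReal.ofReal (h y)) ^ r ∂μ := lintegral_mono hpw
    _ ≤ (∫⁻ y in B, ENNReal.ofReal (h y) ∂μ) ^ r * (μ B) ^ (1 - r) := hhold
    _ ≤ (M * μ (ball c (6 * ρ))) ^ r * (μ (ball c (6 * ρ))) ^ (1 - r) := by
        gcongr <;>
          first
            | linarith
            | exact hhle
            | exact ball_subset_ball (by linarith : ρ ≤ 6 * ρ)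
    _ = M ^ r * ((μ (ball c (6 * ρ))) ^ r * (μ (ball c (6 * ρ))) ^ (1 - r)) := by
        rw [ENNReal.mul_rpow_of_nonneg _ _ hr0.le, mul_assoc]
    _ = M ^ r * μ (ball c (6 * ρ)) := by
        rw [← ENNReal.rpow_add _ _ h60 h6top]
        norm_num
  -- P2
  have hP2 : ENNReal.ofReal |A - m'| * μ B ≤
      ENNReal.ofReal (β ^ r) * M ^ r * μ (ball c (6 * ρ)) := by
    have h1 : ENNReal.ofReal |A - m'| ≤ ENNReal.ofReal (β ^ r) * M ^ r := by
      rw [abs_sub_comm]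
      calc ENNReal.ofReal |m' - A| ≤ ENNReal.ofReal ((β * M') ^ r) :=
          ENNReal.ofReal_le_ofReal hP2abs
      _ = ENNReal.ofReal (β ^ r) * M ^ r := by
          rw [Real.mul_rpow hβpos.le hM'0, ENNReal.ofReal_mul (by positivity),
            Mpow_eq hM hr0]
    calc ENNReal.ofReal |A - m'| * μ B ≤
        (ENNReal.ofReal (β ^ r) * M ^ r) * μ (ball c (6 * ρ)) := by
          gcongr <;>
            first
              | exact h1
              | exact ball_subset_ball (by linarith : ρ ≤ 6 * ρ)
    _ = ENNReal.ofReal (β ^ r) * M ^ r * μ (ball c (6 * ρ)) := rfl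
  -- combine
  apply (ENNReal.div_le_iff h60 h6top).2
  calc (∫⁻ y in B, ENNReal.ofReal |(|f y| ^ r) - m'| ∂μ) ≤
      (∫⁻ y in B, ENNReal.ofReal |(|f y| ^ r) - A| ∂μ) +
        ENNReal.ofReal |A - m'| * μ B := hsplit
  _ ≤ M ^ r * μ (ball c (6 * ρ)) +
      ENNReal.ofReal (β ^ r) * M ^ r * μ (ball c (6 * ρ)) := add_le_add hP1 hP2
  _ = (1 + ENNReal.ofReal (β ^ r)) * M ^ r * μ (ball c (6 * ρ)) := by ring
  _ = ENNReal.ofReal (1 + β ^ r) * M ^ r * μ (ball c (6 * ρ)) := by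
      rw [ENNReal.ofReal_add zero_le_one (by positivity), ENNReal.ofReal_one]

end Term1

end Aux15
end

/-- `M^♯_r f ≤ C_r M^♯ f` for `r ∈ (0,1)`. -/
theorem statement15 (X : Type*) [MetricSpace X] [MeasurableSpace X] [BorelSpace X]
    (μ : MeasureTheory.Measure X) (H : NonHomSpace X μ)
    (r : ℝ) (hr : r ∈ Set.Ioo (0 : ℝ) 1) :
    ∃ C : ℝ, 0 < C ∧
      ∀ f : X → ℝ, MeasureTheory.LocallyIntegrable (fun y => |f y| ^ r) μ →
        ∀ x : X,
          sharpMax μ H.lam (betaRho H.Clam H.N₀ 6) (fun y => |f y| ^ r) x ^ (1 / r) ≤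
            ENNReal.ofReal C * sharpMax μ H.lam (betaRho H.Clam H.N₀ 6) f x := by
  obtain ⟨hr0, hr1⟩ := hr
  have hβpos : 0 < betaRho H.Clam H.N₀ 6 := Aux15.beta_pos H
  refine ⟨(2 + 3 * betaRho H.Clam H.N₀ 6 ^ r) ^ (1 / r), by positivity, ?_⟩
  intro f hg x
  set β := betaRho H.Clam H.N₀ 6 with hβ
  set M := sharpMax μ H.lam β f x with hMdef
  set D : ℝ := 2 + 3 * β ^ r with hD
  have hD0 : 0 < D := by positivity
  by_cases hM : M = ⊤
  · have hC0 : ENNReal.ofReal (D ^ (1 / r)) ≠ 0 := by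
      simp only [ne_eq, ENNReal.ofReal_eq_zero, not_le]
      positivity
    rw [hM, ENNReal.mul_top hC0]
    exact le_top
  · have habs := Aux15.absf_aesm H hr0 hg
    have h1 : (⨆ (c : X) (ρ : ℝ) (_ : 0 < ρ) (_ : x ∈ ball c ρ),
        (∫⁻ y in ball c ρ, ENNReal.ofReal |(fun y => |f y| ^ r) y -
            mAvg μ (ball c (tildeRad μ 6 β c ρ)) (fun y => |f y| ^ r)| ∂μ) /
          μ (ball c (6 * ρ))) ≤ ENNReal.ofReal (1 + β ^ r) * M ^ r := by
      refine iSup_le fun c => iSup_le fun ρ => iSup_le fun hρ => iSup_le fun hx => ?_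
      exact Aux15.term1_bound H hr0 hr1 hM habs hg hρ hx
    have h2 : (⨆ (c : X) (ρ : ℝ) (c' : X) (ρ' : ℝ) (_ : 0 < ρ) (_ : 0 < ρ')
        (_ : x ∈ ball c ρ) (_ : ball c ρ ⊆ ball c' ρ')
        (_ : IsDoubling μ 6 β c ρ) (_ : IsDoubling μ 6 β c' ρ'),
        ENNReal.ofReal (|mAvg μ (ball c ρ) (fun y => |f y| ^ r) -
          mAvg μ (ball c' ρ') (fun y => |f y| ^ r)| / Ktilde μ H.lam 6 c ρ ρ')) ≤
        ENNReal.ofReal (1 + 2 * β ^ r) * M ^ r := by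
      refine iSup_le fun c => iSup_le fun ρ => iSup_le fun c' => iSup_le fun ρ' =>
        iSup_le fun hρ => iSup_le fun hρ' => iSup_le fun hx => iSup_le fun hsub =>
        iSup_le fun hdb => iSup_le fun hdb' => ?_
      exact Aux15.term2_bound H hr0 hr1 hM habs hg hρ hρ' hx hsub hdb hdb'
    have hsum : sharpMax μ H.lam β (fun y => |f y| ^ r) x ≤ ENNReal.ofReal D * M ^ r := by
      calc sharpMax μ H.lam β (fun y => |f y| ^ r) x ≤
          ENNReal.ofReal (1 + β ^ r) * M ^ r + ENNReal.ofReal (1 + 2 * β ^ r) * M ^ r :=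
            add_le_add h1 h2
      _ = (ENNReal.ofReal (1 + β ^ r) + ENNReal.ofReal (1 + 2 * β ^ r)) * M ^ r :=
            (add_mul _ _ _).symm
      _ = ENNReal.ofReal D * M ^ r := by
          rw [← ENNReal.ofReal_add (by positivity) (by positivity)]
          congr 2
          rw [hD]; ring
    calc sharpMax μ H.lam β (fun y => |f y| ^ r) x ^ (1 / r) ≤
        (ENNReal.ofReal D * M ^ r) ^ (1 / r) :=
          ENNReal.rpow_le_rpow hsum (by positivity)
    _ = ENNReal.ofReal D ^ (1 / r) * (M ^ r) ^ (1 / r) :=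
          ENNReal.mul_rpow_of_nonneg _ _ (by positivity)
    _ = ENNReal.ofReal (D ^ (1 / r)) * M := by
        rw [ENNReal.ofReal_rpow_of_nonneg hD0.le (by positivity),
          ← ENNReal.rpow_mul, mul_one_div, div_self hr0.ne', ENNReal.rpow_one]
end
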